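/- arXiv:math/0501517 — 8 statements merged into one kernel-verified Lean document; each statement's English description precedes it below -/
import Mathlib

section
/- Let R be a commutative ring with ℤ-linear endomorphisms ψ^n (n ≥ 1) satisfying ψ^1 = id and ψ^m ψ^n = ψ^{mn} = ψ^n ψ^m. Suppose given, for each prime p, an additive endomorphism g(p) of R such that ψ^p g(q) + g(p) ψ^q = ψ^q g(p) + g(q) ψ^p for all primes p, q. Then there exists a unique function f : ℕ₊ → End(R) with f(p) = g(p) for all primes p and satisfying f(mn) = ψ^m f(n) + f(m) ψ^n for all m, n ≥ 1. -/
/-!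
Write `f` for the sought map. Expanding `f (p₁ ⋯ pᵣ)` by the Leibniz rule one prime at a time
gives `∑ᵢ ψ(p₁ ⋯ pᵢ₋₁) g(pᵢ) ψ(pᵢ₊₁ ⋯ pᵣ)`, which is forced, so `f` is unique. Conversely this
sum, taken along any list of primes, turns concatenation into the Leibniz rule; swapping two
adjacent primes `p, q` only swaps `ψ^p g(q) + g(p) ψ^q` with `ψ^q g(p) + g(q) ψ^p`, which the
hypothesis on `g` makes equal. So the sum depends only on the product of the list, and taking
the list of prime factors of `n` defines `f (n)`.
-/

namespace PsiDerivation

variable {A : Type*} [Semiring A] (ψ g : ℕ → A)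

/-- `listDeriv ψ g [p₁, …, pᵣ] = ∑ᵢ ψ (p₁ ⋯ pᵢ₋₁) * g pᵢ * ψ (pᵢ₊₁ ⋯ pᵣ)`. -/
def listDeriv : List ℕ → A
  | [] => 0
  | p :: l => ψ p * listDeriv l + g p * ψ l.prod

def IsPsiDerivation (f : ℕ → A) : Prop :=
  ∀ m n : ℕ, 1 ≤ m → 1 ≤ n → f (m * n) = ψ m * f n + f m * ψ n

variable {ψ g}

theorem listDeriv_append (hψ1 : ψ 1 = 1)
    (hψ : ∀ m n : ℕ, 1 ≤ m → 1 ≤ n → ψ m * ψ n = ψ (m * n))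
    {l₁ l₂ : List ℕ} (hl₁ : ∀ p ∈ l₁, 0 < p) (hl₂ : ∀ p ∈ l₂, 0 < p) :
    listDeriv ψ g (l₁ ++ l₂) =
      ψ l₁.prod * listDeriv ψ g l₂ + listDeriv ψ g l₁ * ψ l₂.prod := by
  induction l₁ with
  | nil => simp [listDeriv, hψ1]
  | cons p l₁ ih =>
    have hp : 0 < p := hl₁ p List.mem_cons_self
    have hl₁' : ∀ q ∈ l₁, 0 < q := fun q hq => hl₁ q (List.mem_cons_of_mem p hq)
    rw [List.cons_append, listDeriv, listDeriv, ih hl₁', List.prod_append, List.prod_cons,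
      ← hψ _ _ hp (List.prod_pos hl₁'), ← hψ _ _ (List.prod_pos hl₁') (List.prod_pos hl₂)]
    noncomm_ring

theorem listDeriv_pair (hψ1 : ψ 1 = 1) (p q : ℕ) :
    listDeriv ψ g [p, q] = ψ p * g q + g p * ψ q := by
  simp [listDeriv, hψ1]

theorem listDeriv_perm (hψ1 : ψ 1 = 1)
    (hψ : ∀ m n : ℕ, 1 ≤ m → 1 ≤ n → ψ m * ψ n = ψ (m * n))
    (hg : ∀ p q : ℕ, p.Prime → q.Prime → ψ p * g q + g p * ψ q = ψ q * g p + g q * ψ p)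
    {l l' : List ℕ} (h : l.Perm l') (hl : ∀ p ∈ l, p.Prime) :
    listDeriv ψ g l = listDeriv ψ g l' := by
  induction h with
  | nil => rfl
  | cons p _ ih =>
    rw [listDeriv, listDeriv, ih fun q hq => hl q (List.mem_cons_of_mem p hq),
      ‹List.Perm _ _›.prod_eq]
  | swap p q l =>
    simp only [List.forall_mem_cons] at hl
    obtain ⟨hq, hp, hl⟩ := hl
    have hqp : ∀ r ∈ [q, p], 0 < r := by simp [hq.pos, hp.pos]
    have hpq : ∀ r ∈ [p, q], 0 < r := by simp [hq.pos, hp.pos]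
    have htail : ∀ r ∈ l, 0 < r := fun r hr => (hl r hr).pos
    change listDeriv ψ g ([q, p] ++ l) = listDeriv ψ g ([p, q] ++ l)
    rw [listDeriv_append hψ1 hψ hqp htail, listDeriv_append hψ1 hψ hpq htail,
      listDeriv_pair hψ1, listDeriv_pair hψ1, hg q p hq hp, List.prod_pair, List.prod_pair,
      mul_comm q p]
  | trans h₁₂ _ ih₁₂ ih₂₃ =>
    exact (ih₁₂ hl).trans (ih₂₃ fun q hq => hl q (h₁₂.symm.subset hq))

variable (ψ g) in
def primeDeriv (n : ℕ) : A :=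
  listDeriv ψ g n.primeFactorsList

theorem primeDeriv_prime (hψ1 : ψ 1 = 1) {p : ℕ} (hp : p.Prime) : primeDeriv ψ g p = g p := by
  simp [primeDeriv, Nat.primeFactorsList_prime hp, listDeriv, hψ1]

theorem isPsiDerivation_primeDeriv (hψ1 : ψ 1 = 1)
    (hψ : ∀ m n : ℕ, 1 ≤ m → 1 ≤ n → ψ m * ψ n = ψ (m * n))
    (hg : ∀ p q : ℕ, p.Prime → q.Prime → ψ p * g q + g p * ψ q = ψ q * g p + g q * ψ p) :
    IsPsiDerivation ψ (primeDeriv ψ g) := by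
  intro m n hm hn
  have hpos : ∀ k : ℕ, ∀ p ∈ k.primeFactorsList, 0 < p :=
    fun k p hp => (Nat.prime_of_mem_primeFactorsList hp).pos
  rw [primeDeriv, listDeriv_perm hψ1 hψ hg (Nat.perm_primeFactorsList_mul (by omega) (by omega))
      fun p => Nat.prime_of_mem_primeFactorsList,
    listDeriv_append hψ1 hψ (hpos m) (hpos n), Nat.prod_primeFactorsList (by omega),
    Nat.prod_primeFactorsList (by omega), primeDeriv, primeDeriv]

theorem IsPsiDerivation.map_one_eq_zero [IsLeftCancelAdd A] (hψ1 : ψ 1 = 1) {f : ℕ → A}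
    (hf : IsPsiDerivation ψ f) : f 1 = 0 := by
  have h := hf 1 1 le_rfl le_rfl
  rwa [mul_one, hψ1, one_mul, mul_one, left_eq_add] at h

theorem IsPsiDerivation.eq_of_eq_on_primes [IsLeftCancelAdd A] (hψ1 : ψ 1 = 1)
    {f f' : ℕ → A} (hf : IsPsiDerivation ψ f) (hf' : IsPsiDerivation ψ f')
    (hprime : ∀ p : ℕ, p.Prime → f p = f' p) : ∀ n : ℕ, 1 ≤ n → f n = f' n := by
  refine induction_on_primes (by omega) (fun _ => ?_) fun p a hp ih ha => ?_
  · rw [hf.map_one_eq_zero hψ1, hf'.map_one_eq_zero hψ1]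
  · have ha : 1 ≤ a := Nat.pos_of_mul_pos_left ha
    rw [hf p a hp.one_le ha, hf' p a hp.one_le ha, ih ha, hprime p hp]

end PsiDerivation

open PsiDerivation

theorem stmt_2_general {R : Type*} [CommRing R] (ψ g : ℕ → (R →+ R))
    (hψ1 : ψ 1 = AddMonoidHom.id R)
    (hψ : ∀ m n : ℕ, 1 ≤ m → 1 ≤ n → (ψ m).comp (ψ n) = ψ (m * n))
    (hg : ∀ p q : ℕ, p.Prime → q.Prime →
      (ψ p).comp (g q) + (g p).comp (ψ q) = (ψ q).comp (g p) + (g q).comp (ψ p)) :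
    (∃ f : ℕ → (R →+ R),
      (∀ p : ℕ, p.Prime → f p = g p) ∧
      (∀ m n : ℕ, 1 ≤ m → 1 ≤ n →
        f (m * n) = (ψ m).comp (f n) + (f m).comp (ψ n))) ∧
    (∀ f f' : ℕ → (R →+ R),
      ((∀ p : ℕ, p.Prime → f p = g p) ∧
        (∀ m n : ℕ, 1 ≤ m → 1 ≤ n →
          f (m * n) = (ψ m).comp (f n) + (f m).comp (ψ n))) →
      ((∀ p : ℕ, p.Prime → f' p = g p) ∧
        (∀ m n : ℕ, 1 ≤ m → 1 ≤ n →
          f' (m * n) = (ψ m).comp (f' n) + (f' m).comp (ψ n))) →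
      ∀ n : ℕ, 1 ≤ n → f n = f' n) := by
  -- In the ring `AddMonoid.End R`, multiplication is composition.
  have hψ1' : @Eq (AddMonoid.End R) (ψ 1) 1 := hψ1
  refine ⟨⟨primeDeriv (A := AddMonoid.End R) ψ g, fun p hp => primeDeriv_prime hψ1' hp,
    isPsiDerivation_primeDeriv (A := AddMonoid.End R) hψ1' hψ hg⟩,
    fun f f' ⟨hf, hfd⟩ ⟨hf', hf'd⟩ => ?_⟩
  exact IsPsiDerivation.eq_of_eq_on_primes (A := AddMonoid.End R) hψ1' hfd hf'd fun p hp => by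
    rw [hf p hp, hf' p hp]

/-- Given additive endomorphisms `g(p)` for each prime `p` with
`ψ^p g(q) + g(p) ψ^q = ψ^q g(p) + g(q) ψ^p`, there is a unique λ-derivation `f`
(unique on positive integers) extending `g`. -/
theorem stmt_2 {R : Type*} [CommRing R] (ψ g : ℕ → (R →+ R))
    (hψ1 : ψ 1 = AddMonoidHom.id R)
    (hψ : ∀ m n : ℕ, 1 ≤ m → 1 ≤ n → (ψ m).comp (ψ n) = ψ (m * n))
    (hψcomm : ∀ m n : ℕ, 1 ≤ m → 1 ≤ n → (ψ m).comp (ψ n) = (ψ n).comp (ψ m))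
    (hg : ∀ p q : ℕ, p.Prime → q.Prime →
      (ψ p).comp (g q) + (g p).comp (ψ q) = (ψ q).comp (g p) + (g q).comp (ψ p)) :
    (∃ f : ℕ → (R →+ R),
      (∀ p : ℕ, p.Prime → f p = g p) ∧
      (∀ m n : ℕ, 1 ≤ m → 1 ≤ n →
        f (m * n) = (ψ m).comp (f n) + (f m).comp (ψ n))) ∧
    (∀ f f' : ℕ → (R →+ R),
      ((∀ p : ℕ, p.Prime → f p = g p) ∧
        (∀ m n : ℕ, 1 ≤ m → 1 ≤ n →
          f (m * n) = (ψ m).comp (f n) + (f m).comp (ψ n))) →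
      ((∀ p : ℕ, p.Prime → f' p = g p) ∧
        (∀ m n : ℕ, 1 ≤ m → 1 ≤ n →
          f' (m * n) = (ψ m).comp (f' n) + (f' m).comp (ψ n))) →
      ∀ n : ℕ, 1 ≤ n → f n = f' n) :=
  stmt_2_general ψ g hψ1 hψ hg
end

section
/- Let R = ℤ[x]/(x²). A ℤ-linear self-map g of R satisfies g(r)^p ≡ g(r^p) (mod pR) for every prime p and every r ∈ R if and only if g(1) ∈ ℤ·1 and g(x) ∈ ℤ·x (i.e., g is diagonal with respect to the basis {1, x}). -/
open TrivSqZeroExt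

/-- An integer divisible by all primes is zero. -/
lemma int_eq_zero_of_prime_dvd {b : ℤ} (h : ∀ p : ℕ, p.Prime → (p : ℤ) ∣ b) : b = 0 := by
  by_contra hb
  obtain ⟨p, hp, hpp⟩ := Nat.exists_infinite_primes (b.natAbs + 1)
  have h1 : (p : ℤ) ∣ b := h p hpp
  have h2 : (p : ℤ) ≤ |b| := Int.le_of_dvd (abs_pos.mpr hb) ((dvd_abs _ _).mpr h1)
  rw [Int.abs_eq_natAbs] at h2
  exact_mod_cast absurd h2 (by push_cast; omega)

/-- Fermat's little theorem for integers. -/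
lemma fermat_dvd (p : ℕ) (hp : p.Prime) (a : ℤ) : (p : ℤ) ∣ a ^ p - a := by
  haveI := Fact.mk hp
  have : ((a ^ p - a : ℤ) : ZMod p) = 0 := by
    push_cast
    rw [ZMod.pow_card]
    ring
  exact (ZMod.intCast_zmod_eq_zero_iff_dvd _ p).mp this

def dmk (q : ℤ × ℤ) : DualNumber ℤ := q

lemma fst_dmk (a b : ℤ) : fst (dmk (a, b)) = a := rfl

lemma snd_dmk (a b : ℤ) : snd (dmk (a, b)) = b := rfl

lemma dual_dvd (p : ℕ) (x : DualNumber ℤ) (h1 : (p : ℤ) ∣ x.fst) (h2 : (p : ℤ) ∣ x.snd) :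
    ∃ s : DualNumber ℤ, x = (p : DualNumber ℤ) * s := by
  obtain ⟨u, hu⟩ := h1
  obtain ⟨v, hv⟩ := h2
  refine ⟨dmk (u, v), ?_⟩
  ext
  · simp [fst_mul, fst_natCast, fst_mk, fst_dmk, hu]
  · simp [snd_mul, fst_natCast, snd_natCast, fst_mk, snd_mk, fst_dmk, snd_dmk, smul_eq_mul, hv]

/-- For `R = ℤ[x]/(x²)` (dual numbers), a `ℤ`-linear self map `g` satisfies
`g(r)^p ≡ g(r^p) (mod pR)` for all primes `p` and all `r` iff `g(1) ∈ ℤ·1` and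
`g(ε) ∈ ℤ·ε`. -/
theorem stmt_3 (g : DualNumber ℤ →+ DualNumber ℤ) :
    (∀ p : ℕ, p.Prime → ∀ r : DualNumber ℤ,
      ∃ s : DualNumber ℤ, g r ^ p - g (r ^ p) = (p : DualNumber ℤ) * s) ↔
    ((∃ a : ℤ, g 1 = a • (1 : DualNumber ℤ)) ∧
      (∃ d : ℤ, g DualNumber.eps = d • DualNumber.eps)) := by
  constructor
  · intro h
    constructor
    · refine ⟨(g 1).fst, ?_⟩
      have hb : (g 1).snd = 0 := by
        apply int_eq_zero_of_prime_dvd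
        intro p hp
        obtain ⟨s, hs⟩ := h p hp 1
        rw [one_pow] at hs
        have hsnd := congrArg TrivSqZeroExt.snd hs
        simp only [snd_sub, snd_pow, snd_mul, fst_natCast, snd_natCast, smul_eq_mul,
          zero_mul, add_zero, smul_zero, nsmul_eq_mul, Nat.pred_eq_sub_one,
          MulOpposite.op_smul, MulOpposite.smul_eq_mul_unop] at hsnd
        refine ⟨(g 1).fst ^ (p - 1) * (g 1).snd - s.snd, ?_⟩
        linear_combination -hsnd
      ext
      · simp [fst_smul, fst_one, smul_eq_mul]
      · simp [snd_smul, snd_one, smul_eq_mul, hb]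
    · refine ⟨(g DualNumber.eps).snd, ?_⟩
      have hc : (g DualNumber.eps).fst = 0 := by
        apply int_eq_zero_of_prime_dvd
        intro p hp
        obtain ⟨s, hs⟩ := h p hp DualNumber.eps
        have heps : (DualNumber.eps : DualNumber ℤ) ^ p = 0 := by
          have hp2 : p = 2 + (p - 2) := by have := hp.two_le; omega
          rw [hp2, pow_add, pow_two, DualNumber.eps_mul_eps, zero_mul]
        rw [heps, map_zero, sub_zero] at hs
        have h1 := congrArg TrivSqZeroExt.fst hs
        simp only [fst_pow, fst_mul, fst_natCast] at h1
        have hf := fermat_dvd p hp (g DualNumber.eps).fst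
        rw [h1] at hf
        exact (dvd_sub_right ⟨s.fst, rfl⟩).mp hf
      ext
      · simp [fst_smul, DualNumber.fst_eps, smul_eq_mul, hc]
      · simp [snd_smul, DualNumber.snd_eps, smul_eq_mul]
  · rintro ⟨⟨a, ha⟩, ⟨d, hd⟩⟩ p hp r
    have hr : r = r.fst • (1 : DualNumber ℤ) + r.snd • DualNumber.eps := by
      ext
      · simp [fst_add, fst_smul, fst_one, DualNumber.fst_eps, smul_eq_mul]
      · simp [snd_add, snd_smul, snd_one, DualNumber.snd_eps, smul_eq_mul]
    have hgr : g r = dmk (r.fst * a, r.snd * d) := by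
      conv_lhs => rw [hr]
      rw [map_add, map_zsmul, map_zsmul, ha, hd]
      ext
      · simp only [fst_add, fst_smul, fst_one, DualNumber.fst_eps, fst_dmk, fst_mk, smul_eq_mul]
        ring
      · simp only [snd_add, snd_smul, snd_one, DualNumber.snd_eps, snd_dmk, snd_mk, smul_eq_mul]
        ring
    have hgrp : g (r ^ p) = dmk (r.fst ^ p * a, ((p : ℤ) * r.fst ^ (p - 1) * r.snd) * d) := by
      have hrp : r ^ p = (r.fst ^ p) • (1 : DualNumber ℤ)
          + ((p : ℤ) * r.fst ^ (p - 1) * r.snd) • DualNumber.eps := by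
        ext
        · simp only [fst_pow, fst_add, fst_smul, fst_one, DualNumber.fst_eps, smul_eq_mul,
            mul_zero, mul_one, add_zero]
        · simp only [snd_pow, snd_add, snd_smul, snd_one, DualNumber.snd_eps, smul_eq_mul,
            mul_zero, zero_add, mul_one, nsmul_eq_mul, Nat.pred_eq_sub_one]
          ring
      rw [hrp, map_add, map_zsmul, map_zsmul, ha, hd]
      ext
      · simp only [fst_add, fst_smul, fst_one, DualNumber.fst_eps, fst_dmk, fst_mk, smul_eq_mul]
        ring
      · simp only [snd_add, snd_smul, snd_one, DualNumber.snd_eps, snd_dmk, snd_mk, smul_eq_mul]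
        ring
    apply dual_dvd
    · rw [hgrp, hgr]
      simp only [fst_sub, fst_pow, fst_dmk, fst_mk]
      have h1 := fermat_dvd p hp (r.fst * a)
      have h2 := fermat_dvd p hp r.fst
      have heq : (r.fst * a) ^ p - r.fst ^ p * a
          = ((r.fst * a) ^ p - r.fst * a) - a * (r.fst ^ p - r.fst) := by ring
      rw [heq]
      exact dvd_sub h1 (Dvd.dvd.mul_left h2 a)
    · rw [hgrp, hgr]
      simp only [snd_sub, snd_pow, fst_dmk, snd_dmk, fst_mk, snd_mk, smul_eq_mul, nsmul_eq_mul,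
        Nat.pred_eq_sub_one]
      refine ⟨(r.fst * a) ^ (p - 1) * (r.snd * d) - r.fst ^ (p - 1) * r.snd * d, ?_⟩
      ring
end

section
/- Let R = ℤ[x]/(x³). A ℤ-linear self-map g of R satisfies g(r)^p ≡ g(r^p) (mod pR) for all primes p and all r ∈ R if and only if, writing g in matrix form with respect to the basis {1, x, x²}, we have g(1) = a for some a ∈ ℤ, g(x) = jx + kx², and g(x²) = sx + tx² with s ≡ 0 (mod 2) and t ≡ j (mod 2). -/
open Polynomial

/-- The ring `ℤ[x]/(x³)`. -/
abbrev R3 : Type := ℤ[X] ⧸ Ideal.span {(X : ℤ[X]) ^ 3}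

/-- The class of `x` in `ℤ[x]/(x³)`. -/
noncomputable def x3 : R3 := Ideal.Quotient.mk _ (X : ℤ[X])

noncomputable def mk3 : ℤ[X] →+* R3 := Ideal.Quotient.mk _

lemma x3_def : x3 = mk3 X := rfl

lemma x3_cube : x3 ^ 3 = 0 := by
  rw [x3_def, ← map_pow]
  exact Ideal.Quotient.eq_zero_iff_mem.2 (Ideal.subset_span rfl)

lemma smul_repr (u v w : ℤ) :
    (u • 1 + v • x3 + w • x3 ^ 2 : R3) = mk3 (C u + C v * X + C w * X ^ 2) := by
  simp only [zsmul_eq_mul, map_add, map_mul, map_pow, x3_def, mul_one]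
  simp only [show ∀ m : ℤ, (C m : ℤ[X]) = (m : ℤ[X]) from fun m => by simp,
    map_intCast]

lemma repr_exists (y : R3) : ∃ u v w : ℤ, y = u • 1 + v • x3 + w • x3 ^ 2 := by
  obtain ⟨P, rfl⟩ := Ideal.Quotient.mk_surjective y
  refine ⟨P.coeff 0, P.coeff 1, P.coeff 2, ?_⟩
  rw [smul_repr]
  refine (Ideal.Quotient.eq.2 ?_ : Ideal.Quotient.mk (Ideal.span {(X : ℤ[X]) ^ 3}) P = _)
  rw [Ideal.mem_span_singleton, X_pow_dvd_iff]
  intro d hd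
  interval_cases d <;>
    · simp only [coeff_sub, coeff_add, coeff_C, coeff_C_mul, coeff_X_pow, coeff_X]
      norm_num

lemma dvd_of_eq_mul (n u v w : ℤ) (z : R3)
    (h : (u • 1 + v • x3 + w • x3 ^ 2 : R3) = (n : R3) * z) :
    n ∣ u ∧ n ∣ v ∧ n ∣ w := by
  obtain ⟨Q, hQ⟩ := Ideal.Quotient.mk_surjective z
  rw [← show mk3 Q = z from hQ] at h
  rw [smul_repr] at h
  have h' : mk3 (C u + C v * X + C w * X ^ 2 - C n * Q) = 0 := by
    rw [map_sub, map_mul, h]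
    have hCn : (C n : ℤ[X]) = (n : ℤ[X]) := by simp
    rw [hCn, map_intCast]
    ring
  have hm : (C u + C v * X + C w * X ^ 2 - C n * Q) ∈
      Ideal.span {(X : ℤ[X]) ^ 3} := Ideal.Quotient.eq_zero_iff_mem.1 h'
  rw [Ideal.mem_span_singleton, X_pow_dvd_iff] at hm
  have h0 := hm 0 (by norm_num)
  have h1 := hm 1 (by norm_num)
  have h2 := hm 2 (by norm_num)
  simp only [coeff_sub, coeff_add, coeff_C, coeff_C_mul, coeff_X_pow, coeff_X] at h0 h1 h2
  norm_num at h0 h1 h2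
  exact ⟨⟨Q.coeff 0, by linarith⟩, ⟨Q.coeff 1, by linarith⟩, ⟨Q.coeff 2, by linarith⟩⟩

/-- For odd primes, the `p`-th power of a basis combination. -/
lemma pow_eq_odd (p : ℕ) (hp : p.Prime) (hp2 : p ≠ 2) (c0 c1 c2 : ℤ) :
    ∃ r : R3, (c0 • (1 : R3) + c1 • x3 + c2 • x3 ^ 2) ^ p
      = (c0 ^ p) • (1 : R3) + (p : ℤ) • r := by
  have hple : 3 ≤ p := by have := hp.two_le; omega
  set N : R3 := c1 • x3 + c2 • x3 ^ 2 with hN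
  have hN3 : N ^ 3 = 0 := by
    simp only [hN, zsmul_eq_mul]
    linear_combination ((c1 : R3) + (c2 : R3) * x3) ^ 3 * x3_cube
  have hNp : N ^ p = 0 := by
    calc N ^ p = N ^ 3 * N ^ (p - 3) := by rw [← pow_add]; congr 1; omega
    _ = 0 := by rw [hN3, zero_mul]
  obtain ⟨r, hr⟩ := exists_add_pow_prime_eq hp (x := c0 • (1 : R3)) (y := N)
  refine ⟨c0 • (1 : R3) * N * r, ?_⟩
  rw [show c0 • (1 : R3) + c1 • x3 + c2 • x3 ^ 2 = c0 • (1 : R3) + N from by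
    rw [hN, add_assoc], hr, hNp]
  simp only [zsmul_eq_mul, mul_one]
  push_cast
  ring

lemma g_repr {g : R3 →+ R3} {a j k s t : ℤ} (h1 : g 1 = a • (1 : R3))
    (hx : g x3 = j • x3 + k • x3 ^ 2) (hx2 : g (x3 ^ 2) = s • x3 + t • x3 ^ 2)
    (c0 c1 c2 : ℤ) :
    g (c0 • (1 : R3) + c1 • x3 + c2 • x3 ^ 2)
      = (c0 * a) • (1 : R3) + (c1 * j + c2 * s) • x3 + (c1 * k + c2 * t) • x3 ^ 2 := by
  rw [map_add, map_add, map_zsmul, map_zsmul, map_zsmul, h1, hx, hx2]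
  simp only [zsmul_eq_mul, mul_one]
  push_cast
  ring

set_option maxHeartbeats 2000000 in
/-- For `R = ℤ[x]/(x³)`, a `ℤ`-linear self map `g` satisfies `g(r)^p ≡ g(r^p) (mod pR)`
for all primes `p` and all `r ∈ R` iff `g(1) = a·1`, `g(x) = jx + kx²` and
`g(x²) = sx + tx²` with `s ≡ 0 (mod 2)` and `t ≡ j (mod 2)`. -/
theorem stmt_4 (g : R3 →+ R3) :
    (∀ p : ℕ, p.Prime → ∀ y : R3,
      ∃ u : R3, g y ^ p - g (y ^ p) = (p : R3) * u) ↔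
    (∃ a j k s t : ℤ, g 1 = a • (1 : R3) ∧ g x3 = j • x3 + k • x3 ^ 2 ∧
      g (x3 ^ 2) = s • x3 + t • x3 ^ 2 ∧ 2 ∣ s ∧ 2 ∣ t - j) := by
  constructor
  · -- forward direction
    intro h
    obtain ⟨a, b, c, h1⟩ := repr_exists (g 1)
    obtain ⟨m, j, k, hx⟩ := repr_exists (g x3)
    obtain ⟨r, s, t, hx2⟩ := repr_exists (g (x3 ^ 2))
    obtain ⟨p, hpge, hp⟩ :=
      Nat.exists_infinite_primes (b.natAbs + c.natAbs + m.natAbs + r.natAbs + 3)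
    have hp2 : p ≠ 2 := by omega
    have hpI : Prime (p : ℤ) := Nat.prime_iff_prime_int.1 hp
    have small : ∀ e : ℤ, e.natAbs < p → (p : ℤ) ∣ e → e = 0 := by
      intro e he hd
      by_contra he0
      have h1 : (p : ℤ) ≤ |e| := Int.le_of_dvd (abs_pos.2 he0) ((dvd_abs _ _).2 hd)
      have h2 : |e| = (e.natAbs : ℤ) := Int.abs_eq_natAbs e
      omega
    -- x3 powers vanish
    have hxp : x3 ^ p = 0 := by
      calc x3 ^ p = x3 ^ 3 * x3 ^ (p - 3) := by rw [← pow_add]; congr 1; omega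
      _ = 0 := by rw [x3_cube, zero_mul]
    have hx2p : (x3 ^ 2) ^ p = 0 := by
      rw [← pow_mul]
      calc x3 ^ (2 * p) = x3 ^ 3 * x3 ^ (2 * p - 3) := by rw [← pow_add]; congr 1; omega
      _ = 0 := by rw [x3_cube, zero_mul]
    -- y = 1 : get b = c = 0
    obtain ⟨z1, hz1⟩ := h p hp 1
    rw [one_pow, h1] at hz1
    obtain ⟨r1, hr1⟩ := pow_eq_odd p hp hp2 a b c
    rw [hr1] at hz1
    have key1 : (a ^ p - a) • (1 : R3) + (-b) • x3 + (-c) • x3 ^ 2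
        = ((p : ℤ) : R3) * (z1 - r1) := by
      simp only [zsmul_eq_mul, mul_one] at hz1 ⊢
      push_cast at hz1 ⊢
      linear_combination hz1
    obtain ⟨-, db, dc⟩ := dvd_of_eq_mul _ _ _ _ _ key1
    have hb : b = 0 := small b (by omega) (dvd_neg.1 db)
    have hc : c = 0 := small c (by omega) (dvd_neg.1 dc)
    subst hb; subst hc
    -- y = x3 : get m = 0
    obtain ⟨z2, hz2⟩ := h p hp x3
    rw [hxp, map_zero, sub_zero, hx] at hz2
    obtain ⟨r2, hr2⟩ := pow_eq_odd p hp hp2 m j k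
    rw [hr2] at hz2
    have key2 : (m ^ p) • (1 : R3) + (0 : ℤ) • x3 + (0 : ℤ) • x3 ^ 2
        = ((p : ℤ) : R3) * (z2 - r2) := by
      simp only [zsmul_eq_mul, mul_one] at hz2 ⊢
      push_cast at hz2 ⊢
      linear_combination hz2
    obtain ⟨dm, -, -⟩ := dvd_of_eq_mul _ _ _ _ _ key2
    have hm : m = 0 := small m (by omega) (hpI.dvd_of_dvd_pow dm)
    subst hm
    -- y = x3 ^ 2 : get r = 0
    obtain ⟨z3, hz3⟩ := h p hp (x3 ^ 2)
    rw [hx2p, map_zero, sub_zero, hx2] at hz3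
    obtain ⟨r3, hr3⟩ := pow_eq_odd p hp hp2 r s t
    rw [hr3] at hz3
    have key3 : (r ^ p) • (1 : R3) + (0 : ℤ) • x3 + (0 : ℤ) • x3 ^ 2
        = ((p : ℤ) : R3) * (z3 - r3) := by
      simp only [zsmul_eq_mul, mul_one] at hz3 ⊢
      push_cast at hz3 ⊢
      linear_combination hz3
    obtain ⟨dr, -, -⟩ := dvd_of_eq_mul _ _ _ _ _ key3
    have hr : r = 0 := small r (by omega) (hpI.dvd_of_dvd_pow dr)
    subst hr
    -- p = 2, y = x3 : get 2 ∣ s and 2 ∣ j^2 - t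
    obtain ⟨z4, hz4⟩ := h 2 Nat.prime_two x3
    rw [hx, hx2] at hz4
    have key4 : (0 : ℤ) • (1 : R3) + (-s) • x3 + (j ^ 2 - t) • x3 ^ 2
        = ((2 : ℤ) : R3) * z4 := by
      simp only [zsmul_eq_mul, mul_one] at hz4 ⊢
      push_cast at hz4 ⊢
      linear_combination hz4 - (2 * (j : R3) * (k : R3) + (k : R3) ^ 2 * x3) * x3_cube
    obtain ⟨-, ds, dt⟩ := dvd_of_eq_mul _ _ _ _ _ key4
    have hjj : (2 : ℤ) ∣ j ^ 2 - j := by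
      obtain ⟨q, hq⟩ := Int.even_mul_succ_self (j - 1)
      exact ⟨q, by linear_combination hq⟩
    refine ⟨a, j, k, s, t, ?_, ?_, ?_, dvd_neg.1 ds, ?_⟩
    · rw [h1]; simp
    · rw [hx]; simp
    · rw [hx2]; simp
    · have : t - j = (j ^ 2 - j) - (j ^ 2 - t) := by ring
      rw [this]
      exact dvd_sub hjj dt
  · -- backward direction
    rintro ⟨a, j, k, s, t, h1, hx, hx2, hs, ht⟩
    obtain ⟨s₁, rfl⟩ := hs
    obtain ⟨t₁, ht1⟩ := ht
    have htt : t = j + 2 * t₁ := by linarith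
    subst htt
    intro p hp y
    obtain ⟨u, v, w, rfl⟩ := repr_exists y
    rcases eq_or_ne p 2 with rfl | hp2
    · -- p = 2
      have hE2 : (u • (1 : R3) + v • x3 + w • x3 ^ 2) ^ 2
          = (u ^ 2) • (1 : R3) + (2 * u * v) • x3 + (v ^ 2 + 2 * u * w) • x3 ^ 2 := by
        simp only [zsmul_eq_mul, mul_one]
        push_cast
        linear_combination (2 * (v : R3) * (w : R3) + (w : R3) ^ 2 * x3) * x3_cube
      rw [hE2, g_repr h1 hx hx2, g_repr h1 hx hx2]
      obtain ⟨a₂, ha₂⟩ := Int.even_mul_succ_self (a - 1)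
      have ha2 : (a : R3) ^ 2 = (a : R3) + 2 * (a₂ : R3) := by
        have : (a : ℤ) ^ 2 = a + 2 * a₂ := by linear_combination ha₂
        exact_mod_cast congrArg (fun z : ℤ => (z : R3)) this
      obtain ⟨j₂, hj₂⟩ := Int.even_mul_succ_self (j - 1)
      have hj2 : (j : R3) ^ 2 = (j : R3) + 2 * (j₂ : R3) := by
        have : (j : ℤ) ^ 2 = j + 2 * j₂ := by linear_combination hj₂
        exact_mod_cast congrArg (fun z : ℤ => (z : R3)) this
      refine ⟨(u ^ 2 * a₂) • (1 : R3)
        + (-(v ^ 2 * s₁) - 2 * u * w * s₁ + 2 * u * w * a * s₁ - u * v * j + u * v * a * j) • x3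
        + (2 * w ^ 2 * s₁ ^ 2 + 2 * v * w * j * s₁ + v ^ 2 * j₂ - v ^ 2 * t₁ - 2 * u * w * t₁
            - u * w * j + 2 * u * w * a * t₁ + u * w * a * j - u * v * k + u * v * a * k)
          • x3 ^ 2, ?_⟩
      simp only [zsmul_eq_mul, mul_one]
      push_cast
      linear_combination
        ((8 * (w : R3) ^ 2 * s₁ * t₁ + 4 * (w : R3) ^ 2 * j * s₁ + 4 * (v : R3) * w * k * s₁
          + 4 * (v : R3) * w * j * t₁ + 2 * (v : R3) * w * j ^ 2 + 2 * (v : R3) ^ 2 * j * k)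
          + (4 * (w : R3) ^ 2 * t₁ ^ 2 + 4 * (w : R3) ^ 2 * j * t₁ + (w : R3) ^ 2 * j ^ 2
          + 4 * (v : R3) * w * k * t₁ + 2 * (v : R3) * w * j * k + (v : R3) ^ 2 * k ^ 2) * x3)
          * x3_cube
        + ((u : R3) ^ 2) * ha2 + ((v : R3) ^ 2 * x3 ^ 2) * hj2
    · -- p odd
      have hple : 3 ≤ p := by have := hp.two_le; omega
      obtain ⟨r, hr⟩ := pow_eq_odd p hp hp2 u v w
      obtain ⟨r2, hr2⟩ := pow_eq_odd p hp hp2 (u * a) (v * j + w * (2 * s₁))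
        (v * k + w * (j + 2 * t₁))
      rw [hr, g_repr h1 hx hx2, hr2]
      rw [map_add, map_zsmul, map_zsmul, h1]
      -- Fermat
      haveI := Fact.mk hp
      have hfer : (p : ℤ) ∣ a ^ p - a := by
        have hz : (((a ^ p - a : ℤ)) : ZMod p) = 0 := by
          push_cast
          rw [ZMod.pow_card]
          ring
        exact_mod_cast (ZMod.intCast_zmod_eq_zero_iff_dvd _ _).1 hz
      obtain ⟨f, hf⟩ := hfer
      have hfc : (a : R3) ^ p = (a : R3) + (p : R3) * (f : R3) := by
        have : (a : ℤ) ^ p = a + p * f := by linarith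
        exact_mod_cast congrArg (fun z : ℤ => (z : R3)) this
      refine ⟨(u ^ p * f) • (1 : R3) + r2 - g r, ?_⟩
      simp only [zsmul_eq_mul, mul_one, smul_smul]
      push_cast
      linear_combination ((u : R3) ^ p) * hfc
end

section
/- Let R = ℤ[x]/(x³) and fix integers b_p, c_p for each prime p; suppose b_p = 0 for all primes p, c₂ odd, and c_p ≡ 0 (mod p) for odd p. Define ℤ-linear ring endomorphisms ψ^p of R by ψ^p(1) = 1, ψ^p(x) = c_p x², ψ^p(x²) = 0. Then a ℤ-linear map g with g(1) = a, g(x) = jx + kx², g(x²) = sx + tx² (a, j, k, s, t ∈ ℤ, s even, t ≡ j mod 2) commutes with all ψ^p if and only if s = 0 and t = j. Consequently the commutant is a commutative ring, free of rank 3 as a ℤ-module. -/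
open Polynomial

lemma mk_C (a : ℤ) : Ideal.Quotient.mk (Ideal.span {(X : ℤ[X]) ^ 3}) (C a) = a • (1 : R3) := by
  simp [zsmul_eq_mul]

lemma coeff_intCast' (a : ℤ) (n : ℕ) : ((a : ℤ[X])).coeff n = if n = 0 then a else 0 := by
  have : (a : ℤ[X]) = C a := (Polynomial.C_eq_intCast a).symm
  rw [this, Polynomial.coeff_C]

lemma indep3 (a b c : ℤ) (h : a • (1 : R3) + b • x3 + c • x3 ^ 2 = 0) :
    a = 0 ∧ b = 0 ∧ c = 0 := by
  set q : ℤ[X] := C a + C b * X + C c * X ^ 2 with hq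
  have hmk : Ideal.Quotient.mk (Ideal.span {(X : ℤ[X]) ^ 3}) q = 0 := by
    rw [hq, map_add, map_add, map_mul, map_mul, map_pow]
    simpa [x3, mk_C, zsmul_eq_mul, mul_comm] using h
  have hdvd : (X : ℤ[X]) ^ 3 ∣ q := by
    rwa [Ideal.Quotient.eq_zero_iff_mem, Ideal.mem_span_singleton] at hmk
  have hq0 : q = 0 := by
    by_contra h0
    have := Polynomial.natDegree_le_of_dvd hdvd h0
    simp [Polynomial.natDegree_X_pow] at this
    have h2 : q.natDegree ≤ 2 := by
      rw [hq]; compute_degree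
    omega
  refine ⟨?_, ?_, ?_⟩
  · have := congrArg (fun p => Polynomial.coeff p 0) hq0
    simpa [hq, coeff_C, Polynomial.C_eq_intCast, coeff_intCast'] using this
  · have := congrArg (fun p => Polynomial.coeff p 1) hq0
    simpa [hq, coeff_C, Polynomial.C_eq_intCast, coeff_intCast'] using this
  · have := congrArg (fun p => Polynomial.coeff p 2) hq0
    simpa [hq, coeff_C, Polynomial.C_eq_intCast, coeff_intCast'] using this

lemma indep2 (b c : ℤ) (h : b • x3 + c • x3 ^ 2 = 0) : b = 0 ∧ c = 0 := by
  have := indep3 0 b c (by simpa using h)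
  exact ⟨this.2.1, this.2.2⟩

lemma span3 (r : R3) : ∃ a b c : ℤ, r = a • (1 : R3) + b • x3 + c • x3 ^ 2 := by
  obtain ⟨p, rfl⟩ := Ideal.Quotient.mk_surjective r
  set q : ℤ[X] := p %ₘ ((X : ℤ[X]) ^ 3) with hqdef
  have hmon : ((X : ℤ[X]) ^ 3).Monic := monic_X_pow 3
  have hmk : Ideal.Quotient.mk (Ideal.span {(X : ℤ[X]) ^ 3}) p =
      Ideal.Quotient.mk _ q := by
    have h := Polynomial.modByMonic_add_div p ((X : ℤ[X]) ^ 3)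
    have : p - q = (X : ℤ[X]) ^ 3 * (p /ₘ (X ^ 3)) := by
      rw [hqdef]; linear_combination -h
    rw [Ideal.Quotient.eq, this]
    exact Ideal.mem_span_singleton.2 ⟨_, rfl⟩
  have hdeg : q.natDegree < 3 := by
    have := Polynomial.natDegree_modByMonic_lt p hmon
      (by
        intro h
        have := congrArg (fun r => Polynomial.coeff r 0) h
        simp [Polynomial.coeff_X_pow] at this)
    simpa using this
  have hq : q = C (q.coeff 0) + C (q.coeff 1) * X + C (q.coeff 2) * X ^ 2 := by
    conv_lhs => rw [Polynomial.as_sum_range' q 3 hdeg]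
    rw [Finset.sum_range_succ, Finset.sum_range_succ, Finset.sum_range_one,
      ← Polynomial.C_mul_X_pow_eq_monomial, ← Polynomial.C_mul_X_pow_eq_monomial,
      ← Polynomial.C_mul_X_pow_eq_monomial]
    ring
  refine ⟨q.coeff 0, q.coeff 1, q.coeff 2, ?_⟩
  rw [hmk]
  conv_lhs => rw [hq]
  rw [map_add, map_add, map_mul, map_mul, map_pow, mk_C, mk_C, mk_C]
  rw [show Ideal.Quotient.mk (Ideal.span {(X:ℤ[X])^3}) X = x3 from rfl]
  rw [smul_mul_assoc, smul_mul_assoc, one_mul, one_mul]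

lemma hom_ext3 (f h : R3 →+ R3) (h1 : f 1 = h 1) (hx : f x3 = h x3)
    (hx2 : f (x3 ^ 2) = h (x3 ^ 2)) : f = h := by
  ext r
  obtain ⟨a, b, c, rfl⟩ := span3 r
  simp only [map_add, map_zsmul, h1, hx, hx2]

/-- The basis `1, x, x²` of `ℤ[x]/(x³)`. -/
noncomputable def B3 : Module.Basis (Fin 3) ℤ R3 := by
  refine Module.Basis.mk (v := ![1, x3, x3 ^ 2]) ?_ ?_
  · rw [Fintype.linearIndependent_iff]
    intro g hg i
    rw [Fin.sum_univ_three] at hg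
    simp only [Matrix.cons_val_zero, Matrix.cons_val_one, Matrix.head_cons] at hg
    obtain ⟨h0, h1, h2⟩ := indep3 _ _ _ hg
    fin_cases i <;> assumption
  · rintro r -
    obtain ⟨a, b, c, rfl⟩ := span3 r
    refine add_mem (add_mem ?_ ?_) ?_
    · exact Submodule.smul_mem _ _ (Submodule.subset_span ⟨0, rfl⟩)
    · exact Submodule.smul_mem _ _ (Submodule.subset_span ⟨1, rfl⟩)
    · exact Submodule.smul_mem _ _ (Submodule.subset_span ⟨2, rfl⟩)

/-- `toAddMonoidHom` as a linear map. -/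
noncomputable def TAdd : (R3 →ₗ[ℤ] R3) →ₗ[ℤ] (R3 →+ R3) where
  toFun := LinearMap.toAddMonoidHom
  map_add' _ _ := rfl
  map_smul' _ _ := rfl

noncomputable def Wmap : (Fin 3 → ℤ) →ₗ[ℤ] (Fin 3 → R3) where
  toFun c := ![c 0 • 1, c 1 • x3 + c 2 • x3 ^ 2, c 1 • x3 ^ 2]
  map_add' c d := by
    funext i
    fin_cases i <;> simp [add_smul] <;> abel
  map_smul' r c := by
    funext i
    fin_cases i <;> simp [mul_smul, smul_add]

noncomputable def Fmap : (Fin 3 → ℤ) →ₗ[ℤ] (R3 →+ R3) :=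
  TAdd ∘ₗ (B3.constr ℤ).toLinearMap ∘ₗ Wmap

lemma Fmap_one (v : Fin 3 → ℤ) : Fmap v 1 = v 0 • (1 : R3) := by
  have : (1 : R3) = B3 0 := by simp [B3, Module.Basis.mk_apply]
  rw [Fmap]
  simp only [LinearMap.comp_apply, TAdd, LinearMap.coe_mk, AddHom.coe_mk,
    LinearMap.toAddMonoidHom_coe, LinearEquiv.coe_coe]
  conv_lhs => rw [this]
  change (B3.constr ℤ (Wmap v)) (B3 0) = _
  rw [Module.Basis.constr_basis]
  simp [Wmap]

lemma Fmap_x (v : Fin 3 → ℤ) : Fmap v x3 = v 1 • x3 + v 2 • x3 ^ 2 := by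
  have : x3 = B3 1 := by simp [B3, Module.Basis.mk_apply]
  rw [Fmap]
  simp only [LinearMap.comp_apply, TAdd, LinearMap.coe_mk, AddHom.coe_mk,
    LinearMap.toAddMonoidHom_coe, LinearEquiv.coe_coe]
  conv_lhs => rw [this]
  change (B3.constr ℤ (Wmap v)) (B3 1) = _
  rw [Module.Basis.constr_basis]
  simp [Wmap]

lemma Fmap_x2 (v : Fin 3 → ℤ) : Fmap v (x3 ^ 2) = v 1 • x3 ^ 2 := by
  have : x3 ^ 2 = B3 2 := by simp [B3, Module.Basis.mk_apply]
  rw [Fmap]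
  simp only [LinearMap.comp_apply, TAdd, LinearMap.coe_mk, AddHom.coe_mk,
    LinearMap.toAddMonoidHom_coe, LinearEquiv.coe_coe]
  conv_lhs => rw [this]
  change (B3.constr ℤ (Wmap v)) (B3 2) = _
  rw [Module.Basis.constr_basis]
  simp [Wmap]

/-- For the λ-ring structure `S((c_p))` on `ℤ[x]/(x³)` (where `ψ^p(x) = c_p x²`, `c₂` odd,
`p ∣ c_p` for odd `p`), an element `g` of `Endbar` with `g(1) = a·1`, `g(x) = jx + kx²`,
`g(x²) = sx + tx²` (with `s` even, `t ≡ j (mod 2)`) commutes with all `ψ^p` iff `s = 0`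
and `t = j`.  Consequently the commutant `H⁰_λ` is a commutative algebra, free of
rank `3` as a `ℤ`-module. -/
theorem stmt_5 (c : ℕ → ℤ) (hc2 : Odd (c 2))
    (hcp : ∀ p : ℕ, p.Prime → p ≠ 2 → (p : ℤ) ∣ c p)
    (ψ : ℕ → (R3 →+ R3))
    (hψ : ∀ p : ℕ, p.Prime →
      ψ p 1 = 1 ∧ ψ p x3 = c p • x3 ^ 2 ∧ ψ p (x3 ^ 2) = 0) :
    (∀ (g : R3 →+ R3) (a j k s t : ℤ), 2 ∣ s → 2 ∣ t - j →
      g 1 = a • (1 : R3) → g x3 = j • x3 + k • x3 ^ 2 →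
      g (x3 ^ 2) = s • x3 + t • x3 ^ 2 →
      ((∀ p : ℕ, p.Prime → g.comp (ψ p) = (ψ p).comp g) ↔ (s = 0 ∧ t = j))) ∧
    (∀ (g g' : R3 →+ R3) (a j k a' j' k' : ℤ),
      g 1 = a • (1 : R3) → g x3 = j • x3 + k • x3 ^ 2 → g (x3 ^ 2) = j • x3 ^ 2 →
      g' 1 = a' • (1 : R3) → g' x3 = j' • x3 + k' • x3 ^ 2 → g' (x3 ^ 2) = j' • x3 ^ 2 →
      g.comp g' = g'.comp g) ∧
    (∀ N : Submodule ℤ (R3 →+ R3),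
      (∀ g : R3 →+ R3, g ∈ N ↔ ∃ a j k : ℤ,
        g 1 = a • (1 : R3) ∧ g x3 = j • x3 + k • x3 ^ 2 ∧ g (x3 ^ 2) = j • x3 ^ 2) →
      Module.Free ℤ N ∧ Module.finrank ℤ N = 3) := by
  have hc2ne : c 2 ≠ 0 := by
    intro h
    rw [h] at hc2
    simpa using hc2
  refine ⟨?_, ?_, ?_⟩
  · -- part 1
    intro g a j k s t hs htj h1 hx hx2
    constructor
    · intro hcomm
      have h2 := congrArg (fun f : R3 →+ R3 => f x3) (hcomm 2 Nat.prime_two)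
      obtain ⟨hψ1, hψx, hψx2⟩ := hψ 2 Nat.prime_two
      simp only [AddMonoidHom.comp_apply] at h2
      rw [hψx, map_zsmul, hx2, hx, map_add, map_zsmul, map_zsmul, hψx, hψx2] at h2
      have key : (c 2 * s) • x3 + (c 2 * t - j * c 2) • x3 ^ 2 = 0 := by
        simp only [zsmul_eq_mul] at h2 ⊢
        push_cast at h2 ⊢
        linear_combination h2
      obtain ⟨hb, hcc⟩ := indep2 _ _ key
      constructor
      · rcases mul_eq_zero.1 hb with h | h
        · exact absurd h hc2ne
        · exact h
      · have : c 2 * (t - j) = 0 := by linear_combination hcc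
        rcases mul_eq_zero.1 this with h | h
        · exact absurd h hc2ne
        · linarith
    · rintro ⟨rfl, rfl⟩
      intro p hp
      obtain ⟨hψ1, hψx, hψx2⟩ := hψ p hp
      apply hom_ext3
      · simp only [AddMonoidHom.comp_apply, hψ1, h1, map_zsmul, smul_smul]
      · simp only [AddMonoidHom.comp_apply, hψx, hx, hx2, map_zsmul, map_add, hψx2,
          smul_zero, add_zero, smul_add, smul_smul, zero_smul, zero_add, mul_comm]
      · simp only [AddMonoidHom.comp_apply, hψx2, hx2, map_zsmul, map_zero,
          zero_smul, zero_add, hψx2, smul_zero]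
  · -- part 2
    intro g g' a j k a' j' k' h1 hx hx2 h1' hx' hx2'
    apply hom_ext3 <;>
      simp only [AddMonoidHom.comp_apply, h1, hx, hx2, h1', hx', hx2', map_zsmul,
        map_add, smul_add, smul_smul] <;>
      · simp only [zsmul_eq_mul]
        push_cast
        ring
  · -- part 3
    intro N hN
    have hinj : Function.Injective Fmap := by
      intro v w hvw
      have h1 := congrArg (fun f : R3 →+ R3 => f 1) hvw
      have h2 := congrArg (fun f : R3 →+ R3 => f x3) hvw
      simp only [Fmap_one, Fmap_x] at h1 h2
      have e0 : v 0 - w 0 = 0 ∧ (0:ℤ) = 0 ∧ (0:ℤ) = 0 := by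
        apply indep3
        simp only [sub_smul, zero_smul, add_zero]
        rw [sub_eq_zero]
        exact h1
      have e12 : v 1 - w 1 = 0 ∧ v 2 - w 2 = 0 := by
        apply indep2
        simp only [sub_smul]
        have : (v 1 • x3 + v 2 • x3 ^ 2) - (w 1 • x3 + w 2 • x3 ^ 2) = 0 := by
          rw [h2]; abel
        rw [← this]; abel
      funext i
      fin_cases i
      · simpa [sub_eq_zero] using e0.1
      · simpa [sub_eq_zero] using e12.1
      · simpa [sub_eq_zero] using e12.2
    have hrange : N = LinearMap.range Fmap := by
      ext g
      rw [hN]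
      constructor
      · rintro ⟨a, j, k, h1, hx, hx2⟩
        refine ⟨![a, j, k], ?_⟩
        apply hom_ext3
        · rw [Fmap_one, h1]; rfl
        · rw [Fmap_x, hx]; rfl
        · rw [Fmap_x2, hx2]; rfl
      · rintro ⟨v, rfl⟩
        exact ⟨v 0, v 1, v 2, Fmap_one v, Fmap_x v, Fmap_x2 v⟩
    have e : (Fin 3 → ℤ) ≃ₗ[ℤ] N := by
      rw [hrange]
      exact LinearEquiv.ofInjective Fmap hinj
    exact ⟨Module.Free.of_equiv e, by rw [← e.finrank_eq, Module.finrank_fin_fun]⟩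
end

section
/- Fix r ∈ {1, 2, 4}, an odd integer h, and set G = 2^r(2^r − 1), c_p = h·p^r(p^r − 1)/G for each prime p. Let f assign to each prime p a 3×3 matrix f(p) = p·(a(p)_{ij}) with integer entries divisible by p, and let B_p be the matrix [[1,0,0],[0,p^r,0],[0,c_p,p^{2r}]]. Then B_p f(q) + f(p) B_q = B_q f(p) + f(q) B_p holds for all primes p, q if and only if: (i) a(p)_{12} = a(p)_{13} = a(p)_{21} = a(p)_{31} = 0 for all p; (ii) p·q^r(q^r−1)·a(p)_{23} = q·p^r(p^r−1)·a(q)_{23} for all p, q; and (iii) q·c_p·(a(q)_{22} − a(q)_{33}) + q·p^r(p^r−1)·a(q)_{32} = p·c_q·(a(p)_{22} − a(p)_{33}) + p·q^r(q^r−1)·a(p)_{32} for all p, q. -/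
private lemma zero_of_forall_prime_dvd (n : ℤ) (H : ∀ q : ℕ, q.Prime → (q:ℤ) ∣ n) : n = 0 := by
  by_contra hn
  obtain ⟨q, hql, hq⟩ := Nat.exists_infinite_primes (n.natAbs + 1)
  exact hn (Int.eq_zero_of_dvd_of_natAbs_lt_natAbs (H q hq)
    (by simpa using Nat.lt_of_succ_le hql))

private lemma fin3_mk_two {h : 2 < 3} : (⟨2, h⟩ : Fin 3) = 2 := rfl

private lemma dvd_cancel_pow_sub (q : ℕ) (hq : q.Prime) (k : ℕ) (hk : 1 ≤ k) (m : ℤ)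
    (H : (q:ℤ) ∣ m * ((q:ℤ)^k - 1)) : (q:ℤ) ∣ m := by
  have hqp : Prime (q:ℤ) := Nat.prime_iff_prime_int.mp hq
  rcases hqp.dvd_mul.mp H with hd | hd
  · exact hd
  · exact absurd (by simpa using dvd_sub (dvd_pow_self (q:ℤ) (by omega : k ≠ 0)) hd)
      hqp.not_dvd_one

/-- For `r ∈ {1,2,4}`, `h` odd, `G = 2^r(2^r − 1)` and `c_p = h·p^r(p^r − 1)/G`,
a family `f(p) = p·(a(p)_{ij})` of matrices divisible by `p` satisfies
`B_p f(q) + f(p) B_q = B_q f(p) + f(q) B_p` for all primes `p, q`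
(where `B_p = [[1,0,0],[0,p^r,0],[0,c_p,p^{2r}]]`) iff conditions (i), (ii), (iii) hold. -/
theorem stmt_9 (r : ℕ) (hr : r = 1 ∨ r = 2 ∨ r = 4) (h : ℤ) (hodd : Odd h)
    (c : ℕ → ℤ)
    (hc : ∀ p : ℕ, p.Prime →
      c p * (2 ^ r * (2 ^ r - 1)) = h * ((p : ℤ) ^ r * ((p : ℤ) ^ r - 1)))
    (a B : ℕ → Matrix (Fin 3) (Fin 3) ℤ)
    (hB : ∀ p : ℕ, p.Prime →
      B p = !![1, 0, 0; 0, (p : ℤ) ^ r, 0; 0, c p, (p : ℤ) ^ (2 * r)]) :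
    (∀ p q : ℕ, p.Prime → q.Prime →
      B p * ((q : ℤ) • a q) + ((p : ℤ) • a p) * B q =
        B q * ((p : ℤ) • a p) + ((q : ℤ) • a q) * B p) ↔
    ((∀ p : ℕ, p.Prime →
        a p 0 1 = 0 ∧ a p 0 2 = 0 ∧ a p 1 0 = 0 ∧ a p 2 0 = 0) ∧
      (∀ p q : ℕ, p.Prime → q.Prime →
        (p : ℤ) * ((q : ℤ) ^ r * ((q : ℤ) ^ r - 1)) * a p 1 2 =
          (q : ℤ) * ((p : ℤ) ^ r * ((p : ℤ) ^ r - 1)) * a q 1 2) ∧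
      (∀ p q : ℕ, p.Prime → q.Prime →
        (q : ℤ) * c p * (a q 1 1 - a q 2 2) +
            (q : ℤ) * ((p : ℤ) ^ r * ((p : ℤ) ^ r - 1)) * a q 2 1 =
          (p : ℤ) * c q * (a p 1 1 - a p 2 2) +
            (p : ℤ) * ((q : ℤ) ^ r * ((q : ℤ) ^ r - 1)) * a p 2 1)) := by
  have hr1 : 1 ≤ r := by rcases hr with rfl | rfl | rfl <;> norm_num
  have h2r : (2:ℤ) ≤ 2 ^ r := by
    calc (2:ℤ) = 2 ^ 1 := (pow_one 2).symm
    _ ≤ 2 ^ r := pow_le_pow_right₀ (by norm_num) hr1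
  have h2rr : (2:ℤ) ≤ 2 ^ (2*r) := by
    calc (2:ℤ) = 2 ^ 1 := (pow_one 2).symm
    _ ≤ 2 ^ (2*r) := pow_le_pow_right₀ (by norm_num) (by omega)
  have hA : ((1:ℤ) - 2 ^ (2*r)) ≠ 0 := by intro hE; linarith
  have hBne : ((1:ℤ) - 2 ^ r) ≠ 0 := by intro hE; linarith
  have hCne : ((2:ℤ) ^ r - 1) ≠ 0 := by intro hE; linarith
  have hG : ((2:ℤ) ^ r * ((2:ℤ) ^ r - 1)) ≠ 0 := mul_ne_zero (by positivity) hCne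
  have hne0 : ∀ p : ℕ, p.Prime → ((p:ℤ)) ≠ 0 := fun p hp => by
    exact_mod_cast hp.ne_zero
  constructor
  · intro H
    have hent : ∀ p q : ℕ, p.Prime → q.Prime →
        ((1 - (p:ℤ)^r) * q * a q 0 1 - c p * q * a q 0 2
            = (1 - (q:ℤ)^r) * p * a p 0 1 - c q * p * a p 0 2) ∧
        ((1 - (p:ℤ)^(2*r)) * q * a q 0 2 = (1 - (q:ℤ)^(2*r)) * p * a p 0 2) ∧
        (((p:ℤ)^r - 1) * q * a q 1 0 = ((q:ℤ)^r - 1) * p * a p 1 0) ∧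
        (((p:ℤ)^(2*r) - 1) * q * a q 2 0 + c p * q * a q 1 0
            = ((q:ℤ)^(2*r) - 1) * p * a p 2 0 + c q * p * a p 1 0) ∧
        ((p:ℤ) * ((q:ℤ)^r * ((q:ℤ)^r - 1)) * a p 1 2
            = (q:ℤ) * ((p:ℤ)^r * ((p:ℤ)^r - 1)) * a q 1 2) ∧
        ((q:ℤ) * c p * (a q 1 1 - a q 2 2) + (q:ℤ) * ((p:ℤ)^r * ((p:ℤ)^r - 1)) * a q 2 1
            = (p:ℤ) * c q * (a p 1 1 - a p 2 2) + (p:ℤ) * ((q:ℤ)^r * ((q:ℤ)^r - 1)) * a p 2 1) := by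
      intro p q hp hq
      have hEq := H p q hp hq
      rw [hB p hp, hB q hq] at hEq
      have h01 := congrFun (congrFun hEq 0) 1
      have h02 := congrFun (congrFun hEq 0) 2
      have h10 := congrFun (congrFun hEq 1) 0
      have h20 := congrFun (congrFun hEq 2) 0
      have h12 := congrFun (congrFun hEq 1) 2
      have h21 := congrFun (congrFun hEq 2) 1
      simp only [Matrix.add_apply, Matrix.mul_apply, Matrix.smul_apply, Fin.sum_univ_three,
        smul_eq_mul] at h01 h02 h10 h20 h12 h21
      norm_num [Matrix.cons_val_zero, Matrix.cons_val_one, Matrix.cons_val_two, Matrix.head_cons,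
        Matrix.vecHead, Matrix.vecTail, Function.comp] at h01 h02 h10 h20 h12 h21
      refine ⟨by linear_combination h01, by linear_combination h02, by linear_combination h10,
        by linear_combination h20, by linear_combination h12, by linear_combination h21⟩
    -- a · 0 2 = 0
    have ha2_02 : a 2 0 2 = 0 := by
      have hz : (2:ℤ) * a 2 0 2 = 0 :=
        zero_of_forall_prime_dvd _ (fun q hq => by
          have E := (hent 2 q Nat.prime_two hq).2.1
          push_cast at E
          exact dvd_cancel_pow_sub q hq (2*r) (by omega) _
            ⟨-((1 - (2:ℤ)^(2*r)) * a q 0 2), by linear_combination E⟩)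
      linarith
    have ha02 : ∀ p : ℕ, p.Prime → a p 0 2 = 0 := fun p hp => by
      have E := (hent p 2 hp Nat.prime_two).2.1
      push_cast at E
      have h0 : ((1:ℤ) - 2^(2*r)) * ((p:ℤ) * a p 0 2) = 0 := by
        linear_combination (1 - (p:ℤ)^(2*r)) * 2 * ha2_02 - E
      exact ((mul_eq_zero.mp ((mul_eq_zero.mp h0).resolve_left hA)).resolve_left (hne0 p hp))
    -- a · 1 0 = 0
    have ha2_10 : a 2 1 0 = 0 := by
      have hz : (2:ℤ) * a 2 1 0 = 0 :=
        zero_of_forall_prime_dvd _ (fun q hq => by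
          have E := (hent 2 q Nat.prime_two hq).2.2.1
          push_cast at E
          exact dvd_cancel_pow_sub q hq r hr1 _
            ⟨((2:ℤ)^r - 1) * a q 1 0, by linear_combination -E⟩)
      linarith
    have ha10 : ∀ p : ℕ, p.Prime → a p 1 0 = 0 := fun p hp => by
      have E := (hent p 2 hp Nat.prime_two).2.2.1
      push_cast at E
      have h0 : ((2:ℤ)^r - 1) * ((p:ℤ) * a p 1 0) = 0 := by
        linear_combination ((p:ℤ)^r - 1) * 2 * ha2_10 - E
      exact ((mul_eq_zero.mp ((mul_eq_zero.mp h0).resolve_left hCne)).resolve_left (hne0 p hp))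
    -- simplified E01 and E20
    have hE01 : ∀ p q : ℕ, p.Prime → q.Prime →
        (1 - (p:ℤ)^r) * q * a q 0 1 = (1 - (q:ℤ)^r) * p * a p 0 1 := by
      intro p q hp hq
      have E := (hent p q hp hq).1
      rw [ha02 p hp, ha02 q hq] at E
      linear_combination E
    have hE20 : ∀ p q : ℕ, p.Prime → q.Prime →
        ((p:ℤ)^(2*r) - 1) * q * a q 2 0 = ((q:ℤ)^(2*r) - 1) * p * a p 2 0 := by
      intro p q hp hq
      have E := (hent p q hp hq).2.2.2.1
      rw [ha10 p hp, ha10 q hq] at E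
      linear_combination E
    -- a · 0 1 = 0
    have ha2_01 : a 2 0 1 = 0 := by
      have hz : (2:ℤ) * a 2 0 1 = 0 :=
        zero_of_forall_prime_dvd _ (fun q hq => by
          have E := hE01 2 q Nat.prime_two hq
          push_cast at E
          exact dvd_cancel_pow_sub q hq r hr1 _
            ⟨((2:ℤ)^r - 1) * a q 0 1, by linear_combination E⟩)
      linarith
    have ha01 : ∀ p : ℕ, p.Prime → a p 0 1 = 0 := fun p hp => by
      have E := hE01 p 2 hp Nat.prime_two
      push_cast at E
      have h0 : ((1:ℤ) - 2^r) * ((p:ℤ) * a p 0 1) = 0 := by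
        linear_combination (1 - (p:ℤ)^r) * 2 * ha2_01 - E
      exact ((mul_eq_zero.mp ((mul_eq_zero.mp h0).resolve_left hBne)).resolve_left (hne0 p hp))
    -- a · 2 0 = 0
    have ha2_20 : a 2 2 0 = 0 := by
      have hz : (2:ℤ) * a 2 2 0 = 0 :=
        zero_of_forall_prime_dvd _ (fun q hq => by
          have E := hE20 2 q Nat.prime_two hq
          push_cast at E
          exact dvd_cancel_pow_sub q hq (2*r) (by omega) _
            ⟨((2:ℤ)^(2*r) - 1) * a q 2 0, by linear_combination -E⟩)
      linarith
    have ha20 : ∀ p : ℕ, p.Prime → a p 2 0 = 0 := fun p hp => by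
      have E := hE20 p 2 hp Nat.prime_two
      push_cast at E
      have h0 : ((2:ℤ)^(2*r) - 1) * ((p:ℤ) * a p 2 0) = 0 := by
        linear_combination ((p:ℤ)^(2*r) - 1) * 2 * ha2_20 - E
      exact ((mul_eq_zero.mp ((mul_eq_zero.mp h0).resolve_left
        (by intro hE; linarith))).resolve_left (hne0 p hp))
    exact ⟨fun p hp => ⟨ha01 p hp, ha02 p hp, ha10 p hp, ha20 p hp⟩,
      fun p q hp hq => (hent p q hp hq).2.2.2.2.1,
      fun p q hp hq => (hent p q hp hq).2.2.2.2.2⟩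
  · rintro ⟨h1, h2, h3⟩ p q hp hq
    obtain ⟨hp01, hp02, hp10, hp20⟩ := h1 p hp
    obtain ⟨hq01, hq02, hq10, hq20⟩ := h1 q hq
    have hcc : c p * ((q:ℤ) * a q 1 2) = c q * ((p:ℤ) * a p 1 2) := by
      apply mul_right_cancel₀ hG
      linear_combination ((q:ℤ) * a q 1 2) * hc p hp - ((p:ℤ) * a p 1 2) * hc q hq
        - h * (h2 p q hp hq)
    have h2' := h2 p q hp hq
    have h3' := h3 p q hp hq
    rw [hB p hp, hB q hq]
    ext i j
    fin_cases i <;> fin_cases j <;>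
      simp only [Matrix.add_apply, Matrix.mul_apply, Matrix.smul_apply, Fin.sum_univ_three,
        smul_eq_mul, Fin.mk_zero, Fin.mk_one, fin3_mk_two] <;>
      norm_num [Matrix.cons_val_zero, Matrix.cons_val_one, Matrix.cons_val_two, Matrix.head_cons,
        Matrix.vecHead, Matrix.vecTail, Function.comp, hp01, hp02, hp10,
        hp20, hq01, hq02, hq10, hq20]
    · ring
    · linear_combination -hcc
    · linear_combination h2'
    · linear_combination h3'
    · linear_combination hcc
end

section
/- For r ∈ {1, 2, 4}: the greatest common divisor of the set {p^r(p^r − 1) : p prime} equals 2^r(2^r − 1); explicitly, it is 2 for r = 1, 12 for r = 2, and 240 for r = 4. -/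
/-! The divisibility `2 ^ r * (2 ^ r - 1) ∣ n ^ r * (n ^ r - 1)` holds for every integer `n`, not
only for primes, and is a finite check of the identity `x ^ r * (x ^ r - 1) = 0` in `ZMod 2`,
`ZMod 12` and `ZMod 240`. Conversely, a common divisor of all the values divides the value at
`p = 2`, which is `2 ^ r * (2 ^ r - 1)` itself. -/

theorem Int.dvd_pow_mul_pow_sub_one_of_zmod {k r : ℕ}
    (h : ∀ x : ZMod k, x ^ r * (x ^ r - 1) = 0) (n : ℤ) : (k : ℤ) ∣ n ^ r * (n ^ r - 1) := by
  rw [← ZMod.intCast_zmod_eq_zero_iff_dvd]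
  push_cast
  exact h n

set_option maxRecDepth 10000 in
theorem Int.two_pow_mul_two_pow_sub_one_dvd {r : ℕ} (hr : r = 1 ∨ r = 2 ∨ r = 4) (n : ℤ) :
    (2 ^ r * (2 ^ r - 1) : ℤ) ∣ n ^ r * (n ^ r - 1) := by
  rcases hr with rfl | rfl | rfl
  · exact Int.dvd_pow_mul_pow_sub_one_of_zmod (k := 2) (by decide) n
  · exact Int.dvd_pow_mul_pow_sub_one_of_zmod (k := 12) (by decide) n
  · exact Int.dvd_pow_mul_pow_sub_one_of_zmod (k := 240) (by decide) n

/-- For `r ∈ {1,2,4}`, the gcd of `{p^r(p^r − 1) : p prime}` is `2^r(2^r − 1)`,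
which equals `2`, `12`, `240` for `r = 1, 2, 4` respectively. -/
theorem stmt_10 (r : ℕ) (hr : r = 1 ∨ r = 2 ∨ r = 4) :
    (∀ p : ℕ, p.Prime →
      (2 ^ r * (2 ^ r - 1) : ℤ) ∣ (p : ℤ) ^ r * ((p : ℤ) ^ r - 1)) ∧
    (∀ d : ℤ, (∀ p : ℕ, p.Prime → d ∣ (p : ℤ) ^ r * ((p : ℤ) ^ r - 1)) →
      d ∣ (2 ^ r * (2 ^ r - 1) : ℤ)) ∧
    ((2 ^ r * (2 ^ r - 1) : ℤ) = if r = 1 then 2 else if r = 2 then 12 else 240) := by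
  refine ⟨fun p _ => Int.two_pow_mul_two_pow_sub_one_dvd hr p,
    fun d hd => by exact_mod_cast hd 2 Nat.prime_two, ?_⟩
  rcases hr with rfl | rfl | rfl <;> norm_num
end

section
/- Let R = ℤ[x]/(x⁴). A ℤ-linear self-map g of R satisfies g(y)^p ≡ g(y^p) (mod pR) for all primes p and all y ∈ R if and only if, with respect to the basis {1, x, x², x³}: g(1) = a·1 for some a ∈ ℤ; g(x) = jx + kx² + lx³; g(x²) = nx + rx² + sx³ with n ≡ 0 (mod 6), s ≡ 0 (mod 2), r ≡ j (mod 2); and g(x³) = ux + vx² + wx³ with u ≡ 0 (mod 6), v ≡ 0 (mod 3), w ≡ j (mod 3). -/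
open Polynomial

/-- The ring `ℤ[x]/(x⁴)`. -/
abbrev R4 : Type := ℤ[X] ⧸ Ideal.span {(X : ℤ[X]) ^ 4}

/-- The class of `x` in `ℤ[x]/(x⁴)`. -/
noncomputable def x4 : R4 := Ideal.Quotient.mk _ (X : ℤ[X])

namespace SAux

noncomputable def mk4 : ℤ[X] →+* R4 := Ideal.Quotient.mk _

noncomputable def E (a b c d : ℤ) : R4 := a • (1:R4) + b • x4 + c • x4^2 + d • x4^3

lemma E_eq (a b c d : ℤ) : E a b c d = (a:R4) + (b:R4) * x4 + (c:R4) * x4^2 + (d:R4) * x4^3 := by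
  simp [E, zsmul_eq_mul]

lemma mk_eq (a b c d : ℤ) : mk4 (C a + C b * X + C c * X^2 + C d * X^3) = E a b c d := by
  rw [E_eq]
  simp [mk4, x4, map_add, map_mul, map_pow]

lemma coeff_int (a : ℤ) (n : ℕ) : ((a : ℤ[X])).coeff n = if n = 0 then a else 0 := by
  rw [← Polynomial.C_eq_intCast, Polynomial.coeff_C]; simp

lemma x4_pow4 : x4 ^ 4 = 0 := by
  show mk4 X ^ 4 = 0
  rw [← map_pow, mk4, Ideal.Quotient.eq_zero_iff_mem]
  exact Ideal.subset_span rfl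

lemma E_zero_iff (a b c d : ℤ) : E a b c d = 0 ↔ a = 0 ∧ b = 0 ∧ c = 0 ∧ d = 0 := by
  constructor
  · intro h
    rw [← mk_eq, mk4, Ideal.Quotient.eq_zero_iff_mem, Ideal.mem_span_singleton] at h
    rw [Polynomial.X_pow_dvd_iff] at h
    have h0 := h 0 (by norm_num)
    have h1 := h 1 (by norm_num)
    have h2 := h 2 (by norm_num)
    have h3 := h 3 (by norm_num)
    simp [coeff_add, coeff_C, coeff_C_mul, coeff_X_pow, coeff_int] at h0 h1 h2 h3
    exact ⟨h0, h1, h2, h3⟩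
  · rintro ⟨rfl, rfl, rfl, rfl⟩; simp [E]

lemma repr4 (z : R4) : ∃ a b c d : ℤ, z = E a b c d := by
  obtain ⟨Q, rfl⟩ := Ideal.Quotient.mk_surjective z
  refine ⟨Q.coeff 0, Q.coeff 1, Q.coeff 2, Q.coeff 3, ?_⟩
  rw [← mk_eq]
  show mk4 Q = _
  rw [mk4, Ideal.Quotient.mk_eq_mk_iff_sub_mem, Ideal.mem_span_singleton, Polynomial.X_pow_dvd_iff]
  intro i hi
  interval_cases i <;>
    simp [coeff_add, coeff_C, coeff_C_mul, coeff_X_pow, coeff_int]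

lemma E_sub (a b c d a' b' c' d' : ℤ) :
    E a b c d - E a' b' c' d' = E (a-a') (b-b') (c-c') (d-d') := by
  rw [E_eq, E_eq, E_eq]; push_cast; ring

lemma E_dvd_iff (m : ℤ) (a b c d : ℤ) :
    (m : R4) ∣ E a b c d ↔ m ∣ a ∧ m ∣ b ∧ m ∣ c ∧ m ∣ d := by
  constructor
  · rintro ⟨z, hz⟩
    obtain ⟨a', b', c', d', rfl⟩ := repr4 z
    have h : E a b c d - E (m*a') (m*b') (m*c') (m*d') = 0 := by
      rw [sub_eq_zero, hz, E_eq, E_eq]; push_cast; ring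
    rw [E_sub, E_zero_iff] at h
    obtain ⟨h1, h2, h3, h4⟩ := h
    exact ⟨⟨a', by omega⟩, ⟨b', by omega⟩, ⟨c', by omega⟩, ⟨d', by omega⟩⟩
  · rintro ⟨⟨a', rfl⟩, ⟨b', rfl⟩, ⟨c', rfl⟩, ⟨d', rfl⟩⟩
    exact ⟨E a' b' c' d', by rw [E_eq, E_eq]; push_cast; ring⟩

lemma E_dvd_iff' (p : ℕ) (a b c d : ℤ) :
    ((p : ℕ) : R4) ∣ E a b c d ↔ (p:ℤ) ∣ a ∧ (p:ℤ) ∣ b ∧ (p:ℤ) ∣ c ∧ (p:ℤ) ∣ d := by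
  have h := E_dvd_iff (p : ℤ) a b c d
  rwa [Int.cast_natCast] at h

lemma fermat {p : ℕ} (hp : p.Prime) (a : ℤ) : (p:ℤ) ∣ a ^ p - a := by
  haveI : Fact p.Prime := ⟨hp⟩
  have h1 := ZMod.pow_card (a : ZMod p)
  have h : ((a ^ p - a : ℤ) : ZMod p) = 0 := by push_cast [h1]; ring
  exact_mod_cast (ZMod.intCast_zmod_eq_zero_iff_dvd _ _).mp h

lemma frob2 {p : ℕ} (hp : p.Prime) (z w : R4) : (p:R4) ∣ (z + w) ^ p - (z ^ p + w ^ p) := by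
  obtain ⟨r, hr⟩ := exists_add_pow_prime_eq hp z w
  exact ⟨z * w * r, by rw [hr]; ring⟩

lemma frob4 {p : ℕ} (hp : p.Prime) (z1 z2 z3 z4 : R4) :
    (p:R4) ∣ (z1 + z2 + z3 + z4) ^ p - (z1 ^ p + z2 ^ p + z3 ^ p + z4 ^ p) := by
  have h1 := frob2 hp (z1 + z2 + z3) z4
  have h2 := frob2 hp (z1 + z2) z3
  have h3 := frob2 hp z1 z2
  have h := dvd_add (dvd_add h1 h2) h3
  have e : (z1+z2+z3+z4)^p - (z1^p+z2^p+z3^p+z4^p) =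
      ((z1+z2+z3+z4)^p - ((z1+z2+z3)^p + z4^p)) + ((z1+z2+z3)^p - ((z1+z2)^p + z3^p))
      + ((z1+z2)^p - (z1^p + z2^p)) := by ring
  rw [e]; exact h

lemma E_sq (b c d : ℤ) : (E 0 b c d) ^ 2 = E 0 0 (b^2) (2*b*c) := by
  have hx := x4_pow4
  rw [E_eq, E_eq]; push_cast
  linear_combination ((c:R4)^2 + 2*b*d + (2*c*d)*x4 + d^2*x4^2) * hx

lemma E_cube (b c d : ℤ) : (E 0 b c d) ^ 3 = E 0 0 0 (b^3) := by
  have hx := x4_pow4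
  rw [E_eq, E_eq]; push_cast
  linear_combination ((3*b^2*c : R4) + (3*b^2*d+3*b*c^2)*x4 + (6*b*c*d+c^3)*x4^2
    + (3*b*d^2+3*c^2*d)*x4^3 + (3*c*d^2)*x4^4 + d^3*x4^5) * hx

lemma E_factor (b c d : ℤ) : E 0 b c d = x4 * E b c d 0 := by
  rw [E_eq, E_eq]; push_cast; ring

lemma x4_pow_eq_zero {n : ℕ} (hn : 4 ≤ n) : x4 ^ n = 0 := by
  have h : x4 ^ n = x4^4 * x4^(n-4) := by rw [← pow_add]; congr 1; omega
  rw [h, x4_pow4, zero_mul]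

lemma E_pow_ge4 (b c d : ℤ) {n : ℕ} (hn : 4 ≤ n) : (E 0 b c d) ^ n = 0 := by
  rw [E_factor, mul_pow, x4_pow_eq_zero hn, zero_mul]

lemma E_const (a : ℤ) : E a 0 0 0 = (a : R4) := by rw [E_eq]; push_cast; ring

lemma frobE {p : ℕ} (hp : p.Prime) (h5 : 5 ≤ p) (a b c d : ℤ) :
    (p:R4) ∣ (E a b c d) ^ p - E (a^p) 0 0 0 := by
  have h := frob4 hp (a • (1:R4)) (b • x4) (c • x4^2) (d • x4^3)
  have h1 : x4 ^ p = 0 := x4_pow_eq_zero (by omega)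
  have h2 : (x4^2) ^ p = 0 := by rw [← pow_mul]; exact x4_pow_eq_zero (by omega)
  have h3 : (x4^3) ^ p = 0 := by rw [← pow_mul]; exact x4_pow_eq_zero (by omega)
  simpa [E, _root_.smul_pow, mul_pow, h1, h2, h3] using h

lemma g_pmul (g : R4 →+ R4) (p : ℕ) (e : R4) : g ((p:R4) * e) = (p:R4) * g e := by
  rw [← nsmul_eq_mul, map_nsmul, nsmul_eq_mul]

lemma kill (z : ℤ) (hz : ∀ p : ℕ, p.Prime → 5 ≤ p → (p:ℤ) ∣ z) : z = 0 := by
  by_contra hz0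
  obtain ⟨p, hp5, hp⟩ := Nat.exists_infinite_primes (max 5 (z.natAbs + 1))
  have hd := hz p hp (le_trans (le_max_left _ _) hp5)
  have hle := Int.le_of_dvd (abs_pos.mpr hz0) ((dvd_abs _ _).mpr hd)
  rw [Int.abs_eq_natAbs] at hle
  have := le_trans (le_max_right _ _) hp5
  omega

end SAux

open SAux in
set_option maxHeartbeats 2000000 in

/-- For `R = ℤ[x]/(x⁴)`, a `ℤ`-linear self map `g` satisfies `g(y)^p ≡ g(y^p) (mod pR)`
for all primes `p` and all `y` iff `g(1) = a·1`, `g(x) = jx + kx² + lx³`,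
`g(x²) = nx + rx² + sx³` with `6 ∣ n`, `2 ∣ s`, `r ≡ j (mod 2)`, and
`g(x³) = ux + vx² + wx³` with `6 ∣ u`, `3 ∣ v`, `w ≡ j (mod 3)`. -/
theorem stmt_12 (g : R4 →+ R4) :
    (∀ p : ℕ, p.Prime → ∀ y : R4,
      ∃ u : R4, g y ^ p - g (y ^ p) = (p : R4) * u) ↔
    (∃ a j k l n r s u v w : ℤ,
      g 1 = a • (1 : R4) ∧
      g x4 = j • x4 + k • x4 ^ 2 + l • x4 ^ 3 ∧
      g (x4 ^ 2) = n • x4 + r • x4 ^ 2 + s • x4 ^ 3 ∧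
      g (x4 ^ 3) = u • x4 + v • x4 ^ 2 + w • x4 ^ 3 ∧
      6 ∣ n ∧ 2 ∣ s ∧ 2 ∣ r - j ∧ 6 ∣ u ∧ 3 ∣ v ∧ 3 ∣ w - j) := by
  constructor
  · intro H
    obtain ⟨a0, a1, a2, a3, h1⟩ := repr4 (g 1)
    obtain ⟨e, j, k, l, hX⟩ := repr4 (g x4)
    obtain ⟨m, n, r, s, hX2⟩ := repr4 (g (x4^2))
    obtain ⟨t, uu, vv, ww, hX3⟩ := repr4 (g (x4^3))
    -- kill the higher coordinates of g 1
    have key : ∀ p : ℕ, p.Prime → 5 ≤ p → (p:ℤ) ∣ a1 ∧ (p:ℤ) ∣ a2 ∧ (p:ℤ) ∣ a3 := by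
      intro p hp h5
      obtain ⟨U, hU⟩ := H p hp 1
      rw [one_pow] at hU
      have hd : ((p:ℕ):R4) ∣ g 1 ^ p - g 1 := ⟨U, hU⟩
      have hf := frobE hp h5 a0 a1 a2 a3
      rw [← h1] at hf
      have hd2 : ((p:ℕ):R4) ∣ g 1 - E (a0^p) 0 0 0 := by
        have e2 : g 1 - E (a0^p) 0 0 0 = (g 1 ^ p - E (a0^p) 0 0 0) - (g 1 ^ p - g 1) := by ring
        rw [e2]; exact dvd_sub hf hd
      rw [h1, E_sub] at hd2
      have h3 := (E_dvd_iff' p _ _ _ _).mp hd2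
      refine ⟨?_, ?_, ?_⟩
      · simpa using h3.2.1
      · simpa using h3.2.2.1
      · simpa using h3.2.2.2
    have ha1 : a1 = 0 := kill a1 (fun p hp h5 => (key p hp h5).1)
    have ha2 : a2 = 0 := kill a2 (fun p hp h5 => (key p hp h5).2.1)
    have ha3 : a3 = 0 := kill a3 (fun p hp h5 => (key p hp h5).2.2)
    subst ha1; subst ha2; subst ha3
    -- kill constant coordinates
    have killc : ∀ z : R4, (∀ p:ℕ, p.Prime → 5 ≤ p → ((p:ℕ):R4) ∣ z ^ p) → ∀ cc b c d : ℤ,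
        z = E cc b c d → cc = 0 := by
      intro z hz cc b c d hzE
      refine kill cc (fun p hp h5 => ?_)
      have hf := frobE hp h5 cc b c d
      rw [← hzE] at hf
      have hd2 : ((p:ℕ):R4) ∣ E (cc^p) 0 0 0 := by
        have e2 : E (cc^p) 0 0 0 = z ^ p - (z ^ p - E (cc^p) 0 0 0) := by ring
        rw [e2]; exact dvd_sub (hz p hp h5) hf
      have hdcc := ((E_dvd_iff' p _ _ _ _).mp hd2).1
      exact ((Nat.prime_iff_prime_int.mp hp)).dvd_of_dvd_pow hdcc
    have he : e = 0 := by
      refine killc (g x4) (fun p hp h5 => ?_) e j k l hX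
      obtain ⟨U, hU⟩ := H p hp x4
      rw [x4_pow_eq_zero (by omega), map_zero, sub_zero] at hU
      exact ⟨U, hU⟩
    have hm : m = 0 := by
      refine killc (g (x4^2)) (fun p hp h5 => ?_) m n r s hX2
      obtain ⟨U, hU⟩ := H p hp (x4^2)
      have hz : (x4^2 : R4) ^ p = 0 := by rw [← pow_mul]; exact x4_pow_eq_zero (by omega)
      rw [hz, map_zero, sub_zero] at hU
      exact ⟨U, hU⟩
    have ht : t = 0 := by
      refine killc (g (x4^3)) (fun p hp h5 => ?_) t uu vv ww hX3
      obtain ⟨U, hU⟩ := H p hp (x4^3)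
      have hz : (x4^3 : R4) ^ p = 0 := by rw [← pow_mul]; exact x4_pow_eq_zero (by omega)
      rw [hz, map_zero, sub_zero] at hU
      exact ⟨U, hU⟩
    subst he; subst hm; subst ht
    -- p = 2, y = x
    have hd2x : ((2:ℕ):R4) ∣ g x4 ^ 2 - g (x4^2) := by
      obtain ⟨U, hU⟩ := H 2 Nat.prime_two x4; exact ⟨U, by exact_mod_cast hU⟩
    rw [hX, E_sq, hX2, E_sub] at hd2x
    obtain ⟨-, hc1, hc2, hc3⟩ := (E_dvd_iff' 2 _ _ _ _).mp hd2x
    -- p = 3, y = x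
    have hd3x : ((3:ℕ):R4) ∣ g x4 ^ 3 - g (x4^3) := by
      obtain ⟨U, hU⟩ := H 3 Nat.prime_three x4; exact ⟨U, by exact_mod_cast hU⟩
    rw [hX, E_cube, hX3, E_sub] at hd3x
    obtain ⟨-, hd1, hd2, hd3⟩ := (E_dvd_iff' 3 _ _ _ _).mp hd3x
    -- p = 3, y = x²
    have hd3x2 : ((3:ℕ):R4) ∣ g (x4^2) ^ 3 := by
      obtain ⟨U, hU⟩ := H 3 Nat.prime_three (x4^2)
      have hz : (x4^2 : R4) ^ 3 = 0 := by rw [← pow_mul]; exact x4_pow_eq_zero (by norm_num)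
      rw [hz, map_zero, sub_zero] at hU
      exact ⟨U, by exact_mod_cast hU⟩
    rw [hX2, E_cube] at hd3x2
    have hn3 : (3:ℤ) ∣ n := by
      have := ((E_dvd_iff' 3 _ _ _ _).mp hd3x2).2.2.2
      exact ((Nat.prime_iff_prime_int.mp Nat.prime_three)).dvd_of_dvd_pow (by exact_mod_cast this)
    -- p = 2, y = x³
    have hd2x3 : ((2:ℕ):R4) ∣ g (x4^3) ^ 2 := by
      obtain ⟨U, hU⟩ := H 2 Nat.prime_two (x4^3)
      have hz : (x4^3 : R4) ^ 2 = 0 := by rw [← pow_mul]; exact x4_pow_eq_zero (by norm_num)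
      rw [hz, map_zero, sub_zero] at hU
      exact ⟨U, by exact_mod_cast hU⟩
    rw [hX3, E_sq] at hd2x3
    have huu2 : (2:ℤ) ∣ uu := by
      have := ((E_dvd_iff' 2 _ _ _ _).mp hd2x3).2.2.1
      exact ((Nat.prime_iff_prime_int.mp Nat.prime_two)).dvd_of_dvd_pow (by exact_mod_cast this)
    refine ⟨a0, j, k, l, n, r, s, uu, vv, ww, ?_, ?_, ?_, ?_, ?_, ?_, ?_, ?_, ?_, ?_⟩
    · rw [h1]; simp [E]
    · rw [hX]; simp [E]
    · rw [hX2]; simp [E]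
    · rw [hX3]; simp [E]
    · have h2n : (2:ℤ) ∣ n := by omega
      omega
    · obtain ⟨q, hq⟩ := hc3
      exact ⟨j * k - q, by push_cast at hq ⊢; linarith⟩
    · have hfer := fermat Nat.prime_two j
      have e2 : r - j = (j ^ 2 - j) - (j ^ 2 - r) := by ring
      rw [e2]
      exact dvd_sub (by exact_mod_cast hfer) (by exact_mod_cast hc2)
    · omega
    · omega
    · have hfer := fermat Nat.prime_three j
      have e2 : ww - j = (j ^ 3 - j) - (j ^ 3 - ww) := by ring
      rw [e2]
      exact dvd_sub (by exact_mod_cast hfer) (by exact_mod_cast hd3)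
  · rintro ⟨a, j, k, l, n, r, s, u, v, w, hg1, hgx, hgx2, hgx3, hn6, hs2, hrj, hu6, hv3, hwj⟩
    intro p hp y
    have hg1' : g 1 = E a 0 0 0 := by rw [hg1]; simp [E]
    have hgx' : g x4 = E 0 j k l := by rw [hgx]; simp [E]
    have hgx2' : g (x4^2) = E 0 n r s := by rw [hgx2]; simp [E]
    have hgx3' : g (x4^3) = E 0 u v w := by rw [hgx3]; simp [E]
    suffices h : ((p:ℕ):R4) ∣ g y ^ p - g (y ^ p) by
      obtain ⟨c, hc⟩ := h; exact ⟨c, hc⟩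
    have hp2 := hp.two_le
    -- basis congruences
    have B0 : ((p:ℕ):R4) ∣ g 1 ^ p - g 1 := by
      rw [hg1', E_const]
      have hcast : ((a:R4)) ^ p = ((a^p : ℤ) : R4) := by push_cast; ring
      rw [hcast]
      obtain ⟨c, hc⟩ := fermat hp a
      refine ⟨((c:R4)), ?_⟩
      have : ((a^p - a : ℤ) : R4) = ((p:ℤ) * c : ℤ) := by exact_mod_cast congrArg _ hc
      push_cast at this ⊢
      linear_combination this
    have B1 : ((p:ℕ):R4) ∣ g x4 ^ p - g (x4 ^ p) := by
      by_cases hp2' : p = 2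
      · subst hp2'
        rw [hgx', E_sq, hgx2', E_sub]
        refine (E_dvd_iff' 2 _ _ _ _).mpr ⟨by simp, ?_, ?_, ?_⟩
        · simpa using (by omega : (2:ℤ) ∣ 0 - n)
        · have hfer := fermat Nat.prime_two j
          have e2 : j ^ 2 - r = (j ^ 2 - j) - (r - j) := by ring
          rw [e2]
          exact dvd_sub (by exact_mod_cast hfer) (by exact_mod_cast hrj)
        · obtain ⟨q, hq⟩ := hs2
          exact ⟨j * k - q, by push_cast; rw [hq]; push_cast; ring⟩
      · by_cases hp3' : p = 3
        · subst hp3'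
          rw [hgx', E_cube, hgx3', E_sub]
          refine (E_dvd_iff' 3 _ _ _ _).mpr ⟨by simp, ?_, ?_, ?_⟩
          · simpa using (by omega : (3:ℤ) ∣ 0 - u)
          · simpa using (by omega : (3:ℤ) ∣ 0 - v)
          · have hfer := fermat Nat.prime_three j
            have e2 : j ^ 3 - w = (j ^ 3 - j) - (w - j) := by ring
            rw [e2]
            exact dvd_sub (by exact_mod_cast hfer) (by exact_mod_cast hwj)
        · have hp4 : p ≠ 4 := by rintro rfl; norm_num at hp
          have h5 : 5 ≤ p := by omega
          rw [hgx', E_pow_ge4 _ _ _ (by omega), x4_pow_eq_zero (by omega), map_zero, sub_zero]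
          exact dvd_zero _
    have B2 : ((p:ℕ):R4) ∣ g (x4 ^ 2) ^ p - g ((x4 ^ 2) ^ p) := by
      have hz : (x4 ^ 2 : R4) ^ p = 0 := by rw [← pow_mul]; exact x4_pow_eq_zero (by omega)
      rw [hz, map_zero, sub_zero]
      by_cases hp2' : p = 2
      · subst hp2'
        rw [hgx2', E_sq]
        refine (E_dvd_iff' 2 _ _ _ _).mpr ⟨by simp, by simp, ?_, ?_⟩
        · exact dvd_pow (by omega : (2:ℤ) ∣ n) two_ne_zero
        · exact ⟨n * r, by push_cast; ring⟩
      · by_cases hp3' : p = 3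
        · subst hp3'
          rw [hgx2', E_cube]
          refine (E_dvd_iff' 3 _ _ _ _).mpr ⟨by simp, by simp, by simp, ?_⟩
          exact dvd_pow (by omega : (3:ℤ) ∣ n) three_ne_zero
        · have hp4 : p ≠ 4 := by rintro rfl; norm_num at hp
          rw [hgx2', E_pow_ge4 _ _ _ (by omega)]
          exact dvd_zero _
    have B3 : ((p:ℕ):R4) ∣ g (x4 ^ 3) ^ p - g ((x4 ^ 3) ^ p) := by
      have hz : (x4 ^ 3 : R4) ^ p = 0 := by rw [← pow_mul]; exact x4_pow_eq_zero (by omega)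
      rw [hz, map_zero, sub_zero]
      by_cases hp2' : p = 2
      · subst hp2'
        rw [hgx3', E_sq]
        refine (E_dvd_iff' 2 _ _ _ _).mpr ⟨by simp, by simp, ?_, ?_⟩
        · exact dvd_pow (by omega : (2:ℤ) ∣ u) two_ne_zero
        · exact ⟨u * v, by push_cast; ring⟩
      · by_cases hp3' : p = 3
        · subst hp3'
          rw [hgx3', E_cube]
          refine (E_dvd_iff' 3 _ _ _ _).mpr ⟨by simp, by simp, by simp, ?_⟩
          exact dvd_pow (by omega : (3:ℤ) ∣ u) three_ne_zero
        · have hp4 : p ≠ 4 := by rintro rfl; norm_num at hp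
          rw [hgx3', E_pow_ge4 _ _ _ (by omega)]
          exact dvd_zero _
    -- general element
    obtain ⟨α, β, γ, δ, hy⟩ := repr4 y
    subst hy
    have hgy : g (E α β γ δ) = (α:R4) * g 1 + (β:R4) * g x4 + (γ:R4) * g (x4^2)
        + (δ:R4) * g (x4^3) := by
      have hE : E α β γ δ = α • (1:R4) + β • x4 + γ • x4^2 + δ • x4^3 := rfl
      rw [hE, map_add, map_add, map_add, map_zsmul, map_zsmul, map_zsmul, map_zsmul]
      simp [zsmul_eq_mul]
    have F1 : ((p:ℕ):R4) ∣ g (E α β γ δ) ^ p - ((α:R4)^p * g 1 ^ p + (β:R4)^p * g x4 ^ p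
        + (γ:R4)^p * g (x4^2) ^ p + (δ:R4)^p * g (x4^3) ^ p) := by
      rw [hgy]
      have h := frob4 hp ((α:R4) * g 1) ((β:R4) * g x4) ((γ:R4) * g (x4^2)) ((δ:R4) * g (x4^3))
      simpa [mul_pow] using h
    have F2' : ((p:ℕ):R4) ∣ (E α β γ δ) ^ p - ((α:R4)^p * 1 + (β:R4)^p * x4^p
        + (γ:R4)^p * (x4^2)^p + (δ:R4)^p * (x4^3)^p) := by
      have h := frob4 hp ((α:R4) * 1) ((β:R4) * x4) ((γ:R4) * x4^2) ((δ:R4) * x4^3)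
      have hE : E α β γ δ = (α:R4) * 1 + (β:R4) * x4 + (γ:R4) * x4^2 + (δ:R4) * x4^3 := by
        rw [E_eq]; ring
      rw [hE]
      simpa [mul_pow] using h
    obtain ⟨c2, hc2⟩ := F2'
    have hyp : (E α β γ δ) ^ p = ((α:R4)^p * 1 + (β:R4)^p * x4^p
        + (γ:R4)^p * (x4^2)^p + (δ:R4)^p * (x4^3)^p) + ((p:ℕ):R4) * c2 := by
      rw [← hc2]; ring
    have F2 : g ((E α β γ δ) ^ p) = (α:R4)^p * g 1 + (β:R4)^p * g (x4^p)
        + (γ:R4)^p * g ((x4^2)^p) + (δ:R4)^p * g ((x4^3)^p) + ((p:ℕ):R4) * g c2 := by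
      rw [hyp]
      have hsm : ∀ (z : R4) (t : ℤ), g ((t:R4) * z) = (t:R4) * g z := by
        intro z t
        rw [← zsmul_eq_mul, map_zsmul, zsmul_eq_mul]
      have hcast : ∀ t : ℤ, ((t:R4))^p = (((t^p : ℤ)):R4) := by intro t; push_cast; ring
      rw [hcast α, hcast β, hcast γ, hcast δ]
      rw [map_add, map_add, map_add, map_add, g_pmul, hsm, hsm, hsm, hsm]
      all_goals push_cast; ring
    rw [F2]
    have D := dvd_add (dvd_add (dvd_add (B0.mul_left ((α:R4)^p)) (B1.mul_left ((β:R4)^p)))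
      (B2.mul_left ((γ:R4)^p))) (B3.mul_left ((δ:R4)^p))
    have e : g (E α β γ δ) ^ p - ((α:R4)^p * g 1 + (β:R4)^p * g (x4^p)
        + (γ:R4)^p * g ((x4^2)^p) + (δ:R4)^p * g ((x4^3)^p) + ((p:ℕ):R4) * g c2) =
      (g (E α β γ δ) ^ p - ((α:R4)^p * g 1 ^ p + (β:R4)^p * g x4 ^ p
        + (γ:R4)^p * g (x4^2) ^ p + (δ:R4)^p * g (x4^3) ^ p))
      + ((α:R4)^p * (g 1 ^ p - g 1) + (β:R4)^p * (g x4 ^ p - g (x4^p))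
        + (γ:R4)^p * (g (x4^2) ^ p - g ((x4^2)^p)) + (δ:R4)^p * (g (x4^3) ^ p - g ((x4^3)^p)))
      - ((p:ℕ):R4) * g c2 := by ring
    rw [e]
    exact dvd_sub (dvd_add F1 D) (dvd_mul_right _ _)
end

section
/- Let ψ^p be the ℤ-linear endomorphism of ℤ[x]/(x⁴) determined by the ring homomorphism x ↦ (1+x)^p − 1 (the Adams operation of K(ℂP³)). Then the set of ℤ-linear self-maps g of ℤ[x]/(x⁴) satisfying both (a) g(y)^p ≡ g(y^p) (mod p) for all primes p and all y, and (b) gψ^p = ψ^p g for all primes p, consists exactly of the maps with matrix [[a,0,0,0],[0,j,0,0],[0,k,j+2k,0],[0,l,4k+6l,j+6k+6l]] with a, j, k, l ∈ ℤ. This set is a commutative subring of M₄(ℤ), free of rank 4 as a ℤ-module. -/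
open Polynomial

noncomputable def pb : PowerBasis ℤ R4 := AdjoinRoot.powerBasis' (monic_X_pow 4)

lemma pbdim : pb.dim = 4 := by simp [pb, AdjoinRoot.powerBasis']

noncomputable def B : Module.Basis (Fin 4) ℤ R4 := pb.basis.reindex (finCongr pbdim)

lemma B_apply (i : Fin 4) : B i = x4 ^ (i : ℕ) := by
  simp [B, Module.Basis.reindex_apply, PowerBasis.basis_eq_pow]
  rfl

lemma hx4 : x4 ^ 4 = 0 := by
  have : (Ideal.Quotient.mk (Ideal.span {(X : ℤ[X]) ^ 4})) (X ^ 4) = 0 := by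
    rw [Ideal.Quotient.eq_zero_iff_mem]
    exact Ideal.subset_span rfl
  rw [map_pow] at this
  exact this

lemma decomp (y : R4) : ∃ c : Fin 4 → ℤ,
    y = c 0 • (1:R4) + c 1 • x4 + c 2 • x4^2 + c 3 • x4^3 := by
  refine ⟨fun i => B.repr y i, ?_⟩
  have := B.sum_repr y
  rw [Fin.sum_univ_four] at this
  simp only [B_apply] at this
  simpa [pow_zero] using this.symm

lemma indep0 {a b c d : ℤ} (h : a • (1:R4) + b • x4 + c • x4^2 + d • x4^3 = 0) :
    a = 0 ∧ b = 0 ∧ c = 0 ∧ d = 0 := by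
  have li := B.linearIndependent
  rw [Fintype.linearIndependent_iff] at li
  have := li ![a, b, c, d] ?_
  · exact ⟨this 0, this 1, this 2, this 3⟩
  · rw [Fin.sum_univ_four]
    simp only [B_apply]
    simpa [pow_zero] using h

lemma indep {a b c d a' b' c' d' : ℤ}
    (h : a • (1:R4) + b • x4 + c • x4^2 + d • x4^3
       = a' • (1:R4) + b' • x4 + c' • x4^2 + d' • x4^3) :
    a = a' ∧ b = b' ∧ c = c' ∧ d = d' := by
  have key : (a - a') • (1:R4) + (b - b') • x4 + (c - c') • x4^2 + (d - d') • x4^3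
      = (a • (1:R4) + b • x4 + c • x4^2 + d • x4^3)
        - (a' • (1:R4) + b' • x4 + c' • x4^2 + d' • x4^3) := by module
  rw [h, sub_self] at key
  have h2 := indep0 key
  exact ⟨by linarith [h2.1], by linarith [h2.2.1], by linarith [h2.2.2.1], by linarith [h2.2.2.2]⟩

lemma hom_ext {f g : R4 →+ R4} (h0 : f 1 = g 1) (h1 : f x4 = g x4)
    (h2 : f (x4^2) = g (x4^2)) (h3 : f (x4^3) = g (x4^3)) : f = g := by
  ext y
  obtain ⟨c, rfl⟩ := decomp y
  simp only [map_add, AddMonoidHom.map_zsmul, h0, h1, h2, h3]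

lemma c2 (p : ℕ) : ((p.choose 2 : ℕ) : ℤ) * 2 = (p:ℤ)^2 - p := by
  induction p with
  | zero => simp
  | succ n ih =>
    rw [Nat.choose_succ_succ, Nat.choose_one_right]
    push_cast
    nlinarith [ih]

lemma c3 (p : ℕ) : ((p.choose 3 : ℕ) : ℤ) * 6 = (p:ℤ)^3 - 3*(p:ℤ)^2 + 2*p := by
  induction p with
  | zero => simp
  | succ n ih =>
    rw [Nat.choose_succ_succ]
    push_cast
    have := c2 n
    nlinarith [ih, this]

lemma onePowX (p : ℕ) : (1 + x4) ^ p - 1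
    = (p:ℤ) • x4 + ((p.choose 2 : ℕ):ℤ) • x4^2 + ((p.choose 3 : ℕ):ℤ) • x4^3 := by
  induction p with
  | zero => simp
  | succ n ih =>
    have hexp : (1 + x4) ^ (n+1) = (1 + x4) * ((1 + x4)^n - 1) + (1 + x4) := by ring
    rw [hexp, ih]
    simp only [zsmul_eq_mul, Nat.choose_succ_succ, Nat.choose_one_right]
    push_cast
    linear_combination (((n.choose 3 : ℕ)) : R4) * hx4

lemma hqR (p : ℕ) : ((p.choose 2 : ℕ) : R4) * 2 = (p:R4)^2 - p := by
  have := congrArg (fun z : ℤ => (z : R4)) (c2 p)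
  push_cast at this
  exact this

lemma hrR (p : ℕ) : ((p.choose 3 : ℕ) : R4) * 6 = (p:R4)^3 - 3*(p:R4)^2 + 2*p := by
  have := congrArg (fun z : ℤ => (z : R4)) (c3 p)
  push_cast at this
  exact this

lemma onePow2 (p : ℕ) : ((1 + x4) ^ p - 1)^2
    = ((p:ℤ)^2) • x4^2 + ((p:ℤ)^3 - (p:ℤ)^2) • x4^3 := by
  rw [onePowX]
  simp only [zsmul_eq_mul]
  push_cast
  linear_combination ((p:R4)*x4^3) * hqR p + ((p:R4)*(p.choose 3)*2 + ((p.choose 2 : ℕ):R4)^2 + x4*(p.choose 2)*(p.choose 3)*2 + x4^2*((p.choose 3:ℕ):R4)^2) * hx4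

lemma onePow3 (p : ℕ) : ((1 + x4) ^ p - 1)^3 = ((p:ℤ)^3) • x4^3 := by
  rw [onePowX]
  simp only [zsmul_eq_mul]
  push_cast
  linear_combination ((p:R4)*x4*((p.choose 2:ℕ):R4)^2*3 + (p:R4)*x4^2*(p.choose 2)*(p.choose 3)*6 + (p:R4)*x4^3*((p.choose 3:ℕ):R4)^2*3 + (p:R4)^2*(p.choose 2)*3 + (p:R4)^2*x4*(p.choose 3)*3 + x4^2*((p.choose 2:ℕ):R4)^3 + x4^3*((p.choose 2:ℕ):R4)^2*(p.choose 3)*3 + x4^4*(p.choose 2)*((p.choose 3:ℕ):R4)^2*3 + x4^5*((p.choose 3:ℕ):R4)^3) * hx4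

/-- The shape of elements of `H⁰_λ(K(ℂP³))`: matrix
`[[a,0,0,0],[0,j,0,0],[0,k,j+2k,0],[0,l,4k+6l,j+6k+6l]]`. -/
def H0CP3 (g : R4 →+ R4) : Prop :=
  ∃ a j k l : ℤ,
    g 1 = a • (1 : R4) ∧
    g x4 = j • x4 + k • x4 ^ 2 + l • x4 ^ 3 ∧
    g (x4 ^ 2) = (j + 2 * k) • x4 ^ 2 + (4 * k + 6 * l) • x4 ^ 3 ∧
    g (x4 ^ 3) = (j + 6 * k + 6 * l) • x4 ^ 3


lemma indep' {a b c d a' b' c' d' : ℤ}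
    (h : (a:R4) + (b:R4)*x4 + (c:R4)*x4^2 + (d:R4)*x4^3
       = (a':R4) + (b':R4)*x4 + (c':R4)*x4^2 + (d':R4)*x4^3) :
    a = a' ∧ b = b' ∧ c = c' ∧ d = d' := by
  apply indep
  simp only [zsmul_eq_mul]
  linear_combination h

lemma xpow0 {n : ℕ} (h : 4 ≤ n) : x4 ^ n = 0 := by
  rw [← Nat.sub_add_cancel h, pow_add, hx4, mul_zero]

-- values of g on a general element, given the shape
lemma shape_apply {g : R4 →+ R4} {a j k l : ℤ}
    (h0 : g 1 = a • (1 : R4))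
    (h1 : g x4 = j • x4 + k • x4 ^ 2 + l • x4 ^ 3)
    (h2 : g (x4 ^ 2) = (j + 2 * k) • x4 ^ 2 + (4 * k + 6 * l) • x4 ^ 3)
    (h3 : g (x4 ^ 3) = (j + 6 * k + 6 * l) • x4 ^ 3)
    (c0 c1 c2 c3 : ℤ) :
    g (c0 • (1:R4) + c1 • x4 + c2 • x4^2 + c3 • x4^3)
      = (a*c0) • (1:R4) + (j*c1) • x4 + (k*c1 + (j+2*k)*c2) • x4^2
        + (l*c1 + (4*k+6*l)*c2 + (j+6*k+6*l)*c3) • x4^3 := by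
  simp only [map_add, AddMonoidHom.map_zsmul, h0, h1, h2, h3]
  simp only [zsmul_eq_mul]
  push_cast
  ring

-- reverse direction (b): shape implies commuting with all ψ p
lemma shape_commute (ψ : ℕ → (R4 →+ R4))
    (hψ : ∀ p : ℕ, p.Prime →
      ψ p 1 = 1 ∧ ψ p x4 = (1 + x4) ^ p - 1 ∧
      ψ p (x4 ^ 2) = ((1 + x4) ^ p - 1) ^ 2 ∧
      ψ p (x4 ^ 3) = ((1 + x4) ^ p - 1) ^ 3)
    {g : R4 →+ R4} {a j k l : ℤ}
    (h0 : g 1 = a • (1 : R4))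
    (h1 : g x4 = j • x4 + k • x4 ^ 2 + l • x4 ^ 3)
    (h2 : g (x4 ^ 2) = (j + 2 * k) • x4 ^ 2 + (4 * k + 6 * l) • x4 ^ 3)
    (h3 : g (x4 ^ 3) = (j + 6 * k + 6 * l) • x4 ^ 3)
    (p : ℕ) (hp : p.Prime) : g.comp (ψ p) = (ψ p).comp g := by
  obtain ⟨hp1, hpx, hpx2, hpx3⟩ := hψ p hp
  have Px : ψ p x4 = (p:ℤ) • x4 + ((p.choose 2 : ℕ):ℤ) • x4^2 + ((p.choose 3 : ℕ):ℤ) • x4^3 := by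
    rw [hpx, onePowX]
  have Px2 : ψ p (x4^2) = ((p:ℤ)^2) • x4^2 + ((p:ℤ)^3 - (p:ℤ)^2) • x4^3 := by
    rw [hpx2, onePow2]
  have Px3 : ψ p (x4^3) = ((p:ℤ)^3) • x4^3 := by
    rw [hpx3, onePow3]
  apply hom_ext
  · simp only [AddMonoidHom.comp_apply, hp1, h0, AddMonoidHom.map_zsmul, hp1]
  · simp only [AddMonoidHom.comp_apply, Px, h1, map_add, AddMonoidHom.map_zsmul, Px2, Px3, h0, h2, h3]
    simp only [zsmul_eq_mul]
    push_cast
    linear_combination ((k:R4)*x4^2 + (2*(k:R4) + 3*(l:R4))*x4^3) * hqR p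
      + (((k:R4) + (l:R4))*x4^3) * hrR p
  · simp only [AddMonoidHom.comp_apply, Px2, h2, map_add, AddMonoidHom.map_zsmul, Px, Px3, h1, h3]
    simp only [zsmul_eq_mul]
    push_cast
    linear_combination (0:R4) * hqR p
  · simp only [AddMonoidHom.comp_apply, Px3, h3, AddMonoidHom.map_zsmul]
    simp only [zsmul_eq_mul]
    push_cast
    ring

lemma fermat {p : ℕ} (hp : p.Prime) (c : ℤ) : (p:ℤ) ∣ c^p - c := by
  haveI : Fact p.Prime := ⟨hp⟩
  have h : ((c^p - c : ℤ) : ZMod p) = 0 := by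
    push_cast
    rw [ZMod.pow_card]
    ring
  exact_mod_cast (ZMod.intCast_zmod_eq_zero_iff_dvd _ p).mp h

lemma POW {p : ℕ} (hp : p.Prime) (c0 c1 c2 c3 : ℤ) :
    ∃ u : R4, (c0 • (1:R4) + c1 • x4 + c2 • x4^2 + c3 • x4^3)^p
      = (c0^p) • (1:R4) + (c1^p) • x4^p + (p:R4) * u := by
  have h2p : x4 ^ (2*p) = 0 := xpow0 (by have := hp.two_le; omega)
  have h3p : x4 ^ (3*p) = 0 := xpow0 (by have := hp.two_le; omega)
  obtain ⟨r1, hr1⟩ := exists_add_pow_prime_eq hp (c0 • (1:R4)) (c1 • x4 + c2 • x4^2 + c3 • x4^3)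
  obtain ⟨r2, hr2⟩ := exists_add_pow_prime_eq hp (c1 • x4) (c2 • x4^2 + c3 • x4^3)
  obtain ⟨r3, hr3⟩ := exists_add_pow_prime_eq hp (c2 • x4^2) (c3 • x4^3)
  refine ⟨c0 • (1:R4) * (c1 • x4 + c2 • x4^2 + c3 • x4^3) * r1 + c1 • x4 * (c2 • x4^2 + c3 • x4^3) * r2 + c2 • x4^2 * c3 • x4^3 * r3, ?_⟩
  have e0 : (c0 • (1:R4))^p = (c0^p) • 1 := by rw [_root_.smul_pow, one_pow]
  have e1 : (c1 • x4)^p = (c1^p) • x4^p := by rw [_root_.smul_pow]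
  have e2 : (c2 • x4^2)^p = 0 := by rw [_root_.smul_pow, ← pow_mul, h2p, smul_zero]
  have e3 : (c3 • x4^3)^p = 0 := by rw [_root_.smul_pow, ← pow_mul, h3p, smul_zero]
  rw [← add_assoc] at hr2
  rw [show c0 • (1:R4) + c1 • x4 + c2 • x4^2 + c3 • x4^3
      = c0 • (1:R4) + (c1 • x4 + c2 • x4^2 + c3 • x4^3) from by ring, hr1, e0]
  rw [hr2, hr3, e1, e2, e3]
  push_cast
  ring

lemma shape_frob {g : R4 →+ R4} {a j k l : ℤ}
    (h0 : g 1 = a • (1 : R4))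
    (h1 : g x4 = j • x4 + k • x4 ^ 2 + l • x4 ^ 3)
    (h2 : g (x4 ^ 2) = (j + 2 * k) • x4 ^ 2 + (4 * k + 6 * l) • x4 ^ 3)
    (h3 : g (x4 ^ 3) = (j + 6 * k + 6 * l) • x4 ^ 3)
    {p : ℕ} (hp : p.Prime) (y : R4) :
    ∃ u : R4, g y ^ p - g (y ^ p) = (p : R4) * u := by
  obtain ⟨c, hy⟩ := decomp y
  set A := a * c 0 with hA
  set J := j * c 1 with hJ
  set K := k * c 1 + (j+2*k) * c 2 with hK
  set L := l * c 1 + (4*k+6*l) * c 2 + (j+6*k+6*l) * c 3 with hL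
  have hgy : g y = A • (1:R4) + J • x4 + K • x4^2 + L • x4^3 := by
    rw [hy]; exact shape_apply h0 h1 h2 h3 _ _ _ _
  obtain ⟨u1, hu1⟩ := POW hp A J K L
  obtain ⟨u2, hu2⟩ := POW hp (c 0) (c 1) (c 2) (c 3)
  -- g (y^p)
  have hyp : y ^ p = (c 0 ^ p) • (1:R4) + (c 1 ^ p) • x4^p + p • u2 := by
    rw [hy, hu2, nsmul_eq_mul]
  have hgyp : g (y ^ p) = (c 0 ^ p) • (a • (1:R4)) + (c 1 ^ p) • g (x4^p)
      + (p:R4) * g u2 := by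
    rw [hyp, map_add, map_add, AddMonoidHom.map_zsmul, AddMonoidHom.map_zsmul,
      AddMonoidHom.map_nsmul, h0, nsmul_eq_mul]
  -- constant part
  obtain ⟨m0, hm0⟩ : (p:ℤ) ∣ A^p - a * (c 0)^p := by
    have d1 := fermat hp A
    have d2 := fermat hp (c 0)
    have : A^p - a * (c 0)^p = (A^p - A) - a * ((c 0)^p - c 0) := by rw [hA]; ring
    rw [this]
    exact dvd_sub d1 (Dvd.dvd.mul_left d2 a)
  -- middle part
  obtain ⟨v, hv⟩ : ∃ v : R4, (J^p) • x4^p - (c 1 ^ p) • g (x4^p) = (p:R4) * v := by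
    rcases eq_or_ne p 2 with rfl | hne2
    · obtain ⟨m1, hm1⟩ : (2:ℤ) ∣ J^2 - (c 1)^2 * j := by
        have := fermat hp j
        norm_num at this
        obtain ⟨m, hm⟩ := this
        exact ⟨m * (c 1)^2, by rw [hJ]; linear_combination (c 1)^2 * hm⟩
      refine ⟨(m1 - k * (c 1)^2) • x4^2 + (-(2*k+3*l) * (c 1)^2) • x4^3, ?_⟩
      rw [h2]
      have hm1' := congrArg (fun z : ℤ => (z:R4)) hm1
      push_cast at hm1'
      simp only [zsmul_eq_mul, smul_add]
      push_cast
      linear_combination (x4^2 : R4) * hm1'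
    · rcases eq_or_ne p 3 with rfl | hne3
      · obtain ⟨m1, hm1⟩ : (3:ℤ) ∣ J^3 - (c 1)^3 * j := by
          have := fermat hp j
          norm_num at this
          obtain ⟨m, hm⟩ := this
          exact ⟨m * (c 1)^3, by rw [hJ]; linear_combination (c 1)^3 * hm⟩
        refine ⟨(m1 - (2*k+2*l) * (c 1)^3) • x4^3, ?_⟩
        rw [h3]
        have hm1' := congrArg (fun z : ℤ => (z:R4)) hm1
        push_cast at hm1'
        simp only [zsmul_eq_mul, smul_add]
        push_cast
        linear_combination (x4^3 : R4) * hm1'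
      · have hge : 4 ≤ p := by
          have h2 := hp.two_le
          have h4 : p ≠ 4 := by rintro rfl; norm_num at hp
          omega
        rw [xpow0 hge]
        exact ⟨0, by simp⟩
  refine ⟨m0 • (1:R4) + v + u1 - g u2, ?_⟩
  rw [hgy, hu1, hgyp]
  have hm0' : (A^p : R4) - (a:R4) * ((c 0 : ℤ)^p : ℤ) = (p:R4) * m0 := by
    have := congrArg (fun z : ℤ => (z:R4)) hm0
    push_cast at this ⊢
    push_cast
    linear_combination this
  simp only [zsmul_eq_mul, smul_add] at hv ⊢
  push_cast at hv hm0' ⊢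
  linear_combination hm0' + hv

lemma forward (ψ : ℕ → (R4 →+ R4))
    (hψ : ∀ p : ℕ, p.Prime →
      ψ p 1 = 1 ∧ ψ p x4 = (1 + x4) ^ p - 1 ∧
      ψ p (x4 ^ 2) = ((1 + x4) ^ p - 1) ^ 2 ∧
      ψ p (x4 ^ 3) = ((1 + x4) ^ p - 1) ^ 3)
    (g : R4 →+ R4)
    (hC : ∀ p : ℕ, p.Prime → g.comp (ψ p) = (ψ p).comp g) :
    H0CP3 g := by
  obtain ⟨hp1₂, hpx₂, hpx2₂, hpx3₂⟩ := hψ 2 Nat.prime_two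
  obtain ⟨hp1₃, hpx₃, hpx2₃, hpx3₃⟩ := hψ 3 Nat.prime_three
  -- explicit values of ψ 2 and ψ 3
  have P2x : ψ 2 x4 = (2:ℤ) • x4 + (1:ℤ) • x4^2 + (0:ℤ) • x4^3 := by
    rw [hpx₂, onePowX]; norm_num
  have P2x2 : ψ 2 (x4^2) = (4:ℤ) • x4^2 + (4:ℤ) • x4^3 := by
    rw [hpx2₂, onePow2]; norm_num
  have P2x3 : ψ 2 (x4^3) = (8:ℤ) • x4^3 := by
    rw [hpx3₂, onePow3]; norm_num
  have P3x : ψ 3 x4 = (3:ℤ) • x4 + (3:ℤ) • x4^2 + (1:ℤ) • x4^3 := by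
    rw [hpx₃, onePowX]; norm_num
  have P3x2 : ψ 3 (x4^2) = (9:ℤ) • x4^2 + (18:ℤ) • x4^3 := by
    rw [hpx2₃, onePow2]; norm_num
  have P3x3 : ψ 3 (x4^3) = (27:ℤ) • x4^3 := by
    rw [hpx3₃, onePow3]; norm_num
  have hC2 := fun y => DFunLike.congr_fun (hC 2 Nat.prime_two) y
  have hC3 := fun y => DFunLike.congr_fun (hC 3 Nat.prime_three) y
  simp only [AddMonoidHom.comp_apply] at hC2 hC3
  obtain ⟨ca, hg1⟩ := decomp (g 1)
  obtain ⟨cb, hgx⟩ := decomp (g x4)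
  obtain ⟨cc, hgx2⟩ := decomp (g (x4^2))
  obtain ⟨cd, hgx3⟩ := decomp (g (x4^3))
  set a := ca 0; set b := ca 1; set c := ca 2; set d := ca 3
  set e := cb 0; set j := cb 1; set k := cb 2; set l := cb 3
  set m := cc 0; set n := cc 1; set o := cc 2; set q := cc 3
  set r := cd 0; set s := cd 1; set t := cd 2; set u := cd 3
  -- Equation from p = 2 at 1
  have H1 := hC2 1
  rw [hp1₂, hg1, map_add, map_add, map_add, AddMonoidHom.map_zsmul,
    AddMonoidHom.map_zsmul, AddMonoidHom.map_zsmul, AddMonoidHom.map_zsmul,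
    hp1₂, P2x, P2x2, P2x3] at H1
  obtain ⟨E1a, E1b, E1c, E1d⟩ := indep' (a := a) (b := b) (c := c) (d := d)
    (a' := a) (b' := 2*b) (c' := b + 4*c) (d' := 4*c + 8*d) (by
      simp only [zsmul_eq_mul] at H1
      push_cast at H1 ⊢
      linear_combination H1)
  -- Equation from p = 2 at x4
  have H2 := hC2 x4
  rw [P2x, map_add, map_add, AddMonoidHom.map_zsmul, AddMonoidHom.map_zsmul,
    AddMonoidHom.map_zsmul, hgx, hgx2, hgx3] at H2
  rw [map_add, map_add, map_add, AddMonoidHom.map_zsmul, AddMonoidHom.map_zsmul,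
    AddMonoidHom.map_zsmul, AddMonoidHom.map_zsmul, hp1₂, P2x, P2x2, P2x3] at H2
  obtain ⟨E2a, E2b, E2c, E2d⟩ := indep' (a := 2*e + m) (b := 2*j + n) (c := 2*k + o) (d := 2*l + q)
    (a' := e) (b' := 2*j) (c' := j + 4*k) (d' := 4*k + 8*l) (by
      simp only [zsmul_eq_mul] at H2
      push_cast at H2 ⊢
      linear_combination H2)
  -- Equation from p = 3 at x4
  have H3 := hC3 x4
  rw [P3x, map_add, map_add, AddMonoidHom.map_zsmul, AddMonoidHom.map_zsmul,
    AddMonoidHom.map_zsmul, hgx, hgx2, hgx3] at H3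
  rw [map_add, map_add, map_add, AddMonoidHom.map_zsmul, AddMonoidHom.map_zsmul,
    AddMonoidHom.map_zsmul, AddMonoidHom.map_zsmul, hp1₃, P3x, P3x2, P3x3] at H3
  obtain ⟨E3a, E3b, E3c, E3d⟩ := indep' (a := 3*e + 3*m + r) (b := 3*j + 3*n + s)
    (c := 3*k + 3*o + t) (d := 3*l + 3*q + u)
    (a' := e) (b' := 3*j) (c' := 3*j + 9*k) (d' := j + 18*k + 27*l) (by
      simp only [zsmul_eq_mul] at H3
      push_cast at H3 ⊢
      linear_combination H3)
  -- Equation from p = 2 at x4^2 (only the constant term is needed)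
  have H4 := hC2 (x4^2)
  rw [P2x2, map_add, AddMonoidHom.map_zsmul, AddMonoidHom.map_zsmul, hgx2, hgx3] at H4
  rw [map_add, map_add, map_add, AddMonoidHom.map_zsmul, AddMonoidHom.map_zsmul,
    AddMonoidHom.map_zsmul, AddMonoidHom.map_zsmul, hp1₂, P2x, P2x2, P2x3] at H4
  obtain ⟨E4a, E4b, E4c, E4d⟩ := indep' (a := 4*m + 4*r) (b := 4*n + 4*s)
    (c := 4*o + 4*t) (d := 4*q + 4*u)
    (a' := m) (b' := 2*n) (c' := n + 4*o) (d' := 4*o + 8*q) (by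
      simp only [zsmul_eq_mul] at H4
      push_cast at H4 ⊢
      linear_combination H4)
  -- solve the linear system
  have hb : b = 0 := by omega
  have hcc : c = 0 := by omega
  have hd : d = 0 := by omega
  have hm : m = -e := by omega
  have hr0 : r = e := by omega
  have he : e = 0 := by omega
  have hn : n = 0 := by omega
  have hs : s = 0 := by omega
  have ho : o = j + 2*k := by omega
  have hq0 : q = 4*k + 6*l := by omega
  have ht : t = 0 := by omega
  have hu : u = j + 6*k + 6*l := by omega
  refine ⟨a, j, k, l, ?_, ?_, ?_, ?_⟩
  · rw [hg1, hb, hcc, hd]; simp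
  · rw [hgx, he]; simp
  · rw [hgx2, hm, he, hn, ho, hq0]; simp
  · rw [hgx3, hr0, he, hs, ht, hu]; simp

-- commutativity of two shape maps
lemma shape_comm {g g' : R4 →+ R4} (hg : H0CP3 g) (hg' : H0CP3 g') :
    g.comp g' = g'.comp g := by
  obtain ⟨a, j, k, l, h0, h1, h2, h3⟩ := hg
  obtain ⟨a', j', k', l', h0', h1', h2', h3'⟩ := hg'
  apply hom_ext <;>
    (simp only [AddMonoidHom.comp_apply, map_add, AddMonoidHom.map_zsmul,
      h0, h1, h2, h3, h0', h1', h2', h3'];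
     simp only [zsmul_eq_mul]; push_cast; ring)

-- the model map of a given shape
noncomputable def Gm (a j k l : ℤ) : R4 →+ R4 :=
  (B.constr ℤ ![a • (1:R4), j • x4 + k • x4^2 + l • x4^3,
    (j + 2*k) • x4^2 + (4*k + 6*l) • x4^3, (j + 6*k + 6*l) • x4^3]).toAddMonoidHom

lemma Gm_apply (a j k l : ℤ) :
    Gm a j k l 1 = a • (1:R4) ∧
    Gm a j k l x4 = j • x4 + k • x4^2 + l • x4^3 ∧
    Gm a j k l (x4^2) = (j + 2*k) • x4^2 + (4*k + 6*l) • x4^3 ∧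
    Gm a j k l (x4^3) = (j + 6*k + 6*l) • x4^3 := by
  have h : ∀ i : Fin 4, Gm a j k l (x4 ^ (i:ℕ)) = ![a • (1:R4), j • x4 + k • x4^2 + l • x4^3,
      (j + 2*k) • x4^2 + (4*k + 6*l) • x4^3, (j + 6*k + 6*l) • x4^3] i := by
    intro i
    rw [← B_apply]
    exact B.constr_basis ℤ _ i
  refine ⟨?_, ?_, ?_, ?_⟩
  · simpa using h 0
  · simpa using h 1
  · simpa using h 2
  · simpa using h 3

lemma Gm_shape (a j k l : ℤ) : H0CP3 (Gm a j k l) :=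
  ⟨a, j, k, l, (Gm_apply a j k l).1, (Gm_apply a j k l).2.1,
    (Gm_apply a j k l).2.2.1, (Gm_apply a j k l).2.2.2⟩

lemma Gm_eq {g : R4 →+ R4} {a j k l : ℤ}
    (h0 : g 1 = a • (1 : R4))
    (h1 : g x4 = j • x4 + k • x4 ^ 2 + l • x4 ^ 3)
    (h2 : g (x4 ^ 2) = (j + 2 * k) • x4 ^ 2 + (4 * k + 6 * l) • x4 ^ 3)
    (h3 : g (x4 ^ 3) = (j + 6 * k + 6 * l) • x4 ^ 3) : g = Gm a j k l := by
  obtain ⟨g0, g1', g2, g3⟩ := Gm_apply a j k l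
  exact hom_ext (by rw [h0, g0]) (by rw [h1, g1']) (by rw [h2, g2]) (by rw [h3, g3])

noncomputable def Φ : (Fin 4 → ℤ) →ₗ[ℤ] (R4 →+ R4) where
  toFun c := Gm (c 0) (c 1) (c 2) (c 3)
  map_add' c d := by
    obtain ⟨p0, p1, p2, p3⟩ := Gm_apply (c 0 + d 0) (c 1 + d 1) (c 2 + d 2) (c 3 + d 3)
    obtain ⟨q0, q1, q2, q3⟩ := Gm_apply (c 0) (c 1) (c 2) (c 3)
    obtain ⟨r0, r1, r2, r3⟩ := Gm_apply (d 0) (d 1) (d 2) (d 3)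
    apply hom_ext <;>
      simp only [Pi.add_apply, AddMonoidHom.add_apply, p0, p1, p2, p3, q0, q1, q2, q3,
        r0, r1, r2, r3] <;> simp only [zsmul_eq_mul] <;> push_cast <;> ring
  map_smul' z c := by
    obtain ⟨p0, p1, p2, p3⟩ := Gm_apply (z * c 0) (z * c 1) (z * c 2) (z * c 3)
    obtain ⟨q0, q1, q2, q3⟩ := Gm_apply (c 0) (c 1) (c 2) (c 3)
    apply hom_ext <;>
      simp only [Pi.smul_apply, smul_eq_mul, RingHom.id_apply, AddMonoidHom.smul_apply,
        p0, p1, p2, p3, q0, q1, q2, q3] <;>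
      simp only [zsmul_eq_mul, smul_eq_mul] <;> push_cast <;> ring

lemma Φ_inj : Function.Injective Φ := by
  rw [injective_iff_map_eq_zero]
  intro c hc
  obtain ⟨q0, q1, q2, q3⟩ := Gm_apply (c 0) (c 1) (c 2) (c 3)
  have hc' : ∀ y : R4, Gm (c 0) (c 1) (c 2) (c 3) y = 0 := fun y =>
    congrFun (congrArg (DFunLike.coe) (hc : Gm (c 0) (c 1) (c 2) (c 3) = 0)) y
  have e1 := hc' 1; rw [q0] at e1
  have e2 := hc' x4; rw [q1] at e2
  have h1 := indep0 (a := c 0) (b := 0) (c := 0) (d := 0) (by simpa using e1)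
  have h2 := indep0 (a := 0) (b := c 1) (c := c 2) (d := c 3) (by simpa using e2)
  funext i
  fin_cases i
  · exact h1.1
  · exact h2.2.1
  · exact h2.2.2.1
  · exact h2.2.2.2

lemma freeness (N : Submodule ℤ (R4 →+ R4)) (hN : ∀ g, g ∈ N ↔ H0CP3 g) :
    Module.Free ℤ N ∧ Module.finrank ℤ N = 4 := by
  have hrange : N = LinearMap.range Φ := by
    ext g
    rw [hN, LinearMap.mem_range]
    constructor
    · rintro ⟨a, j, k, l, h0, h1, h2, h3⟩
      exact ⟨![a, j, k, l], (Gm_eq h0 h1 h2 h3).symm⟩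
    · rintro ⟨c, rfl⟩
      exact Gm_shape (c 0) (c 1) (c 2) (c 3)
  have e : (Fin 4 → ℤ) ≃ₗ[ℤ] N :=
    (LinearEquiv.ofInjective Φ Φ_inj).trans (LinearEquiv.ofEq _ _ hrange.symm)
  constructor
  · exact Module.Free.of_equiv e
  · rw [← e.finrank_eq]
    simp

/-- For `R = ℤ[x]/(x⁴)` with Adams operations `ψ^p` determined by
`x ↦ (1+x)^p − 1`, the set of `ℤ`-linear self maps satisfying the Frobenius
congruences and commuting with all `ψ^p` consists exactly of maps of the shape
`H0CP3`; it is commutative and free of rank `4` over `ℤ`. -/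
theorem stmt_13 (ψ : ℕ → (R4 →+ R4))
    (hψ : ∀ p : ℕ, p.Prime →
      ψ p 1 = 1 ∧ ψ p x4 = (1 + x4) ^ p - 1 ∧
      ψ p (x4 ^ 2) = ((1 + x4) ^ p - 1) ^ 2 ∧
      ψ p (x4 ^ 3) = ((1 + x4) ^ p - 1) ^ 3) :
    (∀ g : R4 →+ R4,
      ((∀ p : ℕ, p.Prime → ∀ y : R4,
          ∃ u : R4, g y ^ p - g (y ^ p) = (p : R4) * u) ∧
        (∀ p : ℕ, p.Prime → g.comp (ψ p) = (ψ p).comp g)) ↔ H0CP3 g) ∧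
    (∀ g g' : R4 →+ R4, H0CP3 g → H0CP3 g' → g.comp g' = g'.comp g) ∧
    (∀ N : Submodule ℤ (R4 →+ R4), (∀ g, g ∈ N ↔ H0CP3 g) →
      Module.Free ℤ N ∧ Module.finrank ℤ N = 4) := by
  refine ⟨?_, fun g g' hg hg' => shape_comm hg hg', fun N hN => freeness N hN⟩
  intro g
  constructor
  · rintro ⟨hF, hC⟩
    exact forward ψ hψ g hC
  · rintro ⟨a, j, k, l, h0, h1, h2, h3⟩
    exact ⟨fun p hp y => shape_frob h0 h1 h2 h3 hp y,
      fun p hp => shape_commute ψ hψ h0 h1 h2 h3 p hp⟩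
end
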